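/- arXiv:1607.06864 — 10 statements merged into one kernel-verified Lean document; each statement's English description precedes it below -/
import Mathlib

section
/- Every P4-free graph (cograph) on at least 3 vertices is not prime, i.e., it has a homogeneous set. -/
/-!
A `P₄`-free graph on at least two vertices is disconnected or has a disconnected complement
(Seinsche). By induction, add a vertex `v` to a vertex set that is already cut in two: if `v` is
complete to the set it splits off in the complement, and otherwise the non-neighbours of `v` on
one side can only be joined to the neighbours of `v` through an induced `P₄`.

Each side of a cut of `G` or of `Gᶜ` is homogeneous, and with at least three vertices one of the
two sides has at least two vertices.
-/

/-- A homogeneous set of a finite simple graph: a set `X` of vertices with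
`2 ≤ |X| < |V|` such that every vertex outside `X` is complete or anticomplete to `X`. -/
def IsHomogeneousSet {V : Type*} [Fintype V] (G : SimpleGraph V) (X : Finset V) : Prop :=
  2 ≤ X.card ∧ X.card < Fintype.card V ∧
    ∀ v ∉ X, (∀ x ∈ X, G.Adj v x) ∨ (∀ x ∈ X, ¬ G.Adj v x)

/-- A graph is prime if it has no homogeneous set. -/
def IsPrimeGraph {V : Type*} [Fintype V] (G : SimpleGraph V) : Prop :=
  ¬ ∃ X : Finset V, IsHomogeneousSet G X

open Finset

namespace SimpleGraph

variable {V : Type*} {G : SimpleGraph V}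

theorem nonempty_pathGraph_four_embedding {a b c d : V} (hab : G.Adj a b) (hbc : G.Adj b c)
    (hcd : G.Adj c d) (hac : ¬G.Adj a c) (hbd : ¬G.Adj b d) (had : ¬G.Adj a d)
    (hac' : a ≠ c) (hbd' : b ≠ d) (had' : a ≠ d) : Nonempty (pathGraph 4 ↪g G) := by
  refine ⟨⟨⟨![a, b, c, d], ?_⟩, ?_⟩⟩
  · intro i j hij
    fin_cases i <;> fin_cases j <;>
      simp_all [hab.ne, hbc.ne, hcd.ne, hab.ne.symm, hbc.ne.symm, hcd.ne.symm]
  · intro i j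
    change G.Adj (![a, b, c, d] i) (![a, b, c, d] j) ↔ (pathGraph 4).Adj i j
    fin_cases i <;> fin_cases j <;> simp [pathGraph_adj, adj_comm, *]

/-- The complement of the path `0 - 1 - 2 - 3` is the path `1 - 3 - 0 - 2`. -/
theorem isEmpty_pathGraph_four_embedding_compl (h : IsEmpty (pathGraph 4 ↪g G)) :
    IsEmpty (pathGraph 4 ↪g Gᶜ) := by
  refine ⟨fun f => h.elim' (Classical.choice ?_)⟩
  have hf : ∀ i j, Gᶜ.Adj (f i) (f j) ↔ (pathGraph 4).Adj i j := fun i j => f.map_rel_iff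
  have adj : ∀ i j, i ≠ j → ¬(pathGraph 4).Adj i j → G.Adj (f i) (f j) := fun i j hij hn => by
    by_contra h'
    exact hn ((hf i j).1 ⟨f.injective.ne hij, h'⟩)
  have nadj : ∀ i j, (pathGraph 4).Adj i j → ¬G.Adj (f i) (f j) := fun i j h => ((hf i j).2 h).2
  refine nonempty_pathGraph_four_embedding (a := f 1) (b := f 3) (c := f 0) (d := f 2)
    (adj _ _ ?_ ?_) (adj _ _ ?_ ?_) (adj _ _ ?_ ?_) (nadj _ _ ?_) (nadj _ _ ?_) (nadj _ _ ?_)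
    (f.injective.ne ?_) (f.injective.ne ?_) (f.injective.ne ?_) <;> simp [pathGraph_adj]

def IsCut (G : SimpleGraph V) (S A : Finset V) : Prop :=
  A ⊆ S ∧ ∀ a ∈ A, ∀ b ∈ S, b ∉ A → ¬G.Adj a b

def DisconnectedOn (G : SimpleGraph V) (S : Finset V) : Prop :=
  ∃ A, G.IsCut S A ∧ A.Nonempty ∧ ¬S ⊆ A

theorem IsCut.isHomogeneousSet [Fintype V] {X : Finset V} (h : G.IsCut univ X) (h2 : 2 ≤ #X)
    (hlt : #X < Fintype.card V) : IsHomogeneousSet G X :=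
  ⟨h2, hlt, fun v hv => .inr fun x hx hvx => h.2 x hx v (mem_univ v) hv hvx.symm⟩

variable [DecidableEq V]

theorem IsCut.sdiff {S A : Finset V} (h : G.IsCut S A) : G.IsCut S (S \ A) :=
  ⟨sdiff_subset, fun a ha b hb hbA hab =>
    h.2 b (by simpa [hb] using hbA) a (mem_sdiff.1 ha).1 (mem_sdiff.1 ha).2 hab.symm⟩

theorem IsCut.insert_of_forall_not_adj {v : V} {S A : Finset V} (h : G.IsCut S A)
    (hvA : ∀ a ∈ A, ¬G.Adj v a) : G.IsCut (insert v S) A := by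
  refine ⟨h.1.trans (subset_insert v S), fun a ha b hb hbA hab => ?_⟩
  rcases mem_insert.1 hb with rfl | hbS
  · exact hvA a ha hab.symm
  · exact h.2 a ha b hbS hbA hab

theorem disconnectedOn_insert_of_forall_not_adj {v : V} {S : Finset V} (hv : v ∉ S)
    (hS : S.Nonempty) (h : ∀ w ∈ S, ¬G.Adj v w) : G.DisconnectedOn (insert v S) := by
  obtain ⟨w, hw⟩ := hS
  refine ⟨{v}, ⟨by simp, ?_⟩, singleton_nonempty v, fun hsub => ?_⟩
  · intro a ha b hb hbv
    rw [mem_singleton.1 ha]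
    exact h b ((mem_insert.1 hb).resolve_left (by simpa using hbv))
  · exact hv (mem_singleton.1 (hsub (mem_insert_of_mem hw)) ▸ hw)

theorem compl_disconnectedOn_insert_of_forall_adj {v : V} {S : Finset V} (hv : v ∉ S)
    (hS : S.Nonempty) (h : ∀ w ∈ S, G.Adj v w) : Gᶜ.DisconnectedOn (insert v S) :=
  disconnectedOn_insert_of_forall_not_adj hv hS fun w hw hc => hc.2 (h w hw)

/-- If `v` has a neighbour `b` beyond the cut, the non-neighbours of `v` in `A` split off from
`insert v S`: an edge `c - a` from a neighbour `c` to a non-neighbour `a` of `v` in `A` would give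
the induced path `b - v - c - a`. -/
theorem IsCut.disconnectedOn_insert (hfree : IsEmpty (pathGraph 4 ↪g G)) {v w : V}
    {S A : Finset V} (hA : G.IsCut S A) (hSA : ¬S ⊆ A) (hv : v ∉ S) (hw : w ∈ A)
    (hvw : ¬G.Adj v w) : G.DisconnectedOn (insert v S) := by
  classical
  by_cases hQ : ∃ b ∈ S, b ∉ A ∧ G.Adj v b
  · obtain ⟨b, hbS, hbA, hvb⟩ := hQ
    refine ⟨A.filter (¬G.Adj v ·), ⟨(filter_subset _ _).trans (hA.1.trans (subset_insert _ _)),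
      ?_⟩, ⟨w, mem_filter.2 ⟨hw, hvw⟩⟩,
      fun h => hv (hA.1 (mem_filter.1 (h (mem_insert_self v S))).1)⟩
    intro a ha c hc hca
    obtain ⟨haA, hva⟩ := mem_filter.1 ha
    rcases mem_insert.1 hc with rfl | hcS
    · exact fun h => hva h.symm
    by_cases hcA : c ∈ A
    · have hvc : G.Adj v c := by simpa [hcA] using hca
      intro hac
      exact hfree.false <| Classical.choice <| nonempty_pathGraph_four_embedding hvb.symm hvc
        hac.symm (fun h => hA.2 c hcA b hbS hbA h.symm) hva
        (fun h => hA.2 a haA b hbS hbA h.symm) (fun h => hbA (h ▸ hcA))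
        (fun h => hv (h ▸ hA.1 haA)) (fun h => hbA (h ▸ haA))
    · exact hA.2 a haA c hcS hcA
  · push Not at hQ
    refine ⟨S \ A, hA.sdiff.insert_of_forall_not_adj fun b hb => hQ b (mem_sdiff.1 hb).1
      (mem_sdiff.1 hb).2, ?_, fun h => ?_⟩
    · simpa [Finset.Nonempty, not_subset] using hSA
    · simpa [hw] using h (mem_insert_of_mem (hA.1 hw))

theorem DisconnectedOn.insert_or_compl (hfree : IsEmpty (pathGraph 4 ↪g G)) {v : V}
    {S : Finset V} (hS : G.DisconnectedOn S) (hv : v ∉ S) :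
    G.DisconnectedOn (insert v S) ∨ Gᶜ.DisconnectedOn (insert v S) := by
  obtain ⟨A, hA, ⟨a, ha⟩, hSA⟩ := hS
  by_cases hcomplete : ∀ w ∈ S, G.Adj v w
  · exact .inr (compl_disconnectedOn_insert_of_forall_adj hv ⟨a, hA.1 ha⟩ hcomplete)
  push Not at hcomplete
  obtain ⟨w, hwS, hvw⟩ := hcomplete
  by_cases hwA : w ∈ A
  · exact .inl (hA.disconnectedOn_insert hfree hSA hv hwA hvw)
  · refine .inl (hA.sdiff.disconnectedOn_insert hfree (fun h => ?_) hv
      (mem_sdiff.2 ⟨hwS, hwA⟩) hvw)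
    simpa [ha] using h (hA.1 ha)

theorem disconnectedOn_or_compl (hfree : IsEmpty (pathGraph 4 ↪g G)) (S : Finset V)
    (hS : 2 ≤ #S) : G.DisconnectedOn S ∨ Gᶜ.DisconnectedOn S := by
  induction S using Finset.induction_on with
  | empty => simp at hS
  | @insert v S hv ih =>
    rw [card_insert_of_notMem hv] at hS
    obtain hS1 | hS2 := (Nat.le_of_lt_succ hS).eq_or_lt'
    · obtain ⟨w, rfl⟩ := card_eq_one.1 hS1
      by_cases hvw : G.Adj v w
      · exact .inr (compl_disconnectedOn_insert_of_forall_adj hv (singleton_nonempty w) (by simpa))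
      · exact .inl (disconnectedOn_insert_of_forall_not_adj hv (singleton_nonempty w) (by simpa))
    · rcases ih hS2 with h | h
      · exact h.insert_or_compl hfree hv
      · simpa [or_comm] using h.insert_or_compl (isEmpty_pathGraph_four_embedding_compl hfree) hv

theorem DisconnectedOn.exists_isHomogeneousSet [Fintype V] (h : G.DisconnectedOn univ)
    (hcard : 3 ≤ Fintype.card V) : ∃ X, IsHomogeneousSet G X := by
  obtain ⟨A, hA, hAne, hA_ne_univ⟩ := h
  have hsum : #(univ \ A) + #A = Fintype.card V := card_sdiff_add_card_eq_card (subset_univ A)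
  have hpos : 0 < #(univ \ A) := card_pos.2 (sdiff_nonempty.2 hA_ne_univ)
  have hApos : 0 < #A := hAne.card_pos
  by_cases h2 : 2 ≤ #A
  · exact ⟨A, hA.isHomogeneousSet h2 (by omega)⟩
  · exact ⟨univ \ A, hA.sdiff.isHomogeneousSet (by omega) (by omega)⟩

end SimpleGraph

theorem IsHomogeneousSet.of_compl {V : Type*} [Fintype V] {G : SimpleGraph V} {X : Finset V}
    (h : IsHomogeneousSet Gᶜ X) : IsHomogeneousSet G X := by
  refine ⟨h.1, h.2.1, fun v hv =>
    (h.2.2 v hv).symm.imp (fun hc x hx => ?_) fun hc x hx => (hc x hx).2⟩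
  by_contra hvx
  exact hc x hx ⟨fun hxv => hv (hxv ▸ hx), hvx⟩

/-- Every `P₄`-free graph on at least 3 vertices has a homogeneous set. -/
theorem cograph_not_prime {V : Type*} [Fintype V] (G : SimpleGraph V)
    (hcard : 3 ≤ Fintype.card V)
    (hfree : IsEmpty (SimpleGraph.pathGraph 4 ↪g G)) :
    ∃ X : Finset V, IsHomogeneousSet G X := by
  classical
  rcases G.disconnectedOn_or_compl hfree univ (by rw [card_univ]; omega) with h | h
  · exact h.exists_isHomogeneousSet hcard
  · obtain ⟨X, hX⟩ := h.exists_isHomogeneousSet hcard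
    exact ⟨X, hX.of_compl⟩
end

section
/- For every n ≥ 3, the line graph of K_{2,n} is prime. -/
/-- The 1-subdivision of the star `K_{1,n}`: center `none`, subdivision vertices
`some (inl i)`, leaves `some (inr i)`. -/
def subdivStar (n : ℕ) : SimpleGraph (Option (Fin n ⊕ Fin n)) :=
  SimpleGraph.fromRel fun a b =>
    match a, b with
    | none, some (Sum.inl _) => True
    | some (Sum.inl i), some (Sum.inr j) => i = j
    | _, _ => False

/-- The line graph of `K_{2,n}`: vertices are the edges `(a, j)` of `K_{2,n}`,
adjacent iff they share an endpoint. -/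
def lineK2 (n : ℕ) : SimpleGraph (Fin 2 × Fin n) :=
  SimpleGraph.fromRel fun a b => a.1 = b.1 ∨ a.2 = b.2

/-- The thin spider with `n` legs: vertices `v_i = inl i`, `u_i = inr i`;
edges `v_i u_i` and `u_i u_j` for `i ≠ j`. -/
def thinSpider (n : ℕ) : SimpleGraph (Fin n ⊕ Fin n) :=
  SimpleGraph.fromRel fun a b =>
    match a, b with
    | Sum.inl i, Sum.inr j => i = j
    | Sum.inr _, Sum.inr _ => True
    | _, _ => False

/-- The half-graph of height `n`: vertices `v_i = inl i`, `u_j = inr j`;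
edges `v_i u_j` for `i ≤ j`. -/
def halfGraph (n : ℕ) : SimpleGraph (Fin n ⊕ Fin n) :=
  SimpleGraph.fromRel fun a b =>
    match a, b with
    | Sum.inl i, Sum.inr j => i ≤ j
    | _, _ => False

/-- The graph `H'_{n,I}`: apex `w = none` adjacent to all `v_i`, plus
edges `v_i u_j` for `i ≤ j` and all `u_i u_j`. -/
def HPrimeG (n : ℕ) : SimpleGraph (Option (Fin n ⊕ Fin n)) :=
  SimpleGraph.fromRel fun a b =>
    match a, b with
    | none, some (Sum.inl _) => True
    | some (Sum.inl i), some (Sum.inr j) => i ≤ j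
    | some (Sum.inr _), some (Sum.inr _) => True
    | _, _ => False

/-- The graph `H*_n`: apex `w = none` adjacent only to `v_1`, plus
edges `v_i u_j` for `i ≤ j` and all `u_i u_j`. -/
def HStarG (n : ℕ) : SimpleGraph (Option (Fin n ⊕ Fin n)) :=
  SimpleGraph.fromRel fun a b =>
    match a, b with
    | none, some (Sum.inl i) => (i : ℕ) = 0
    | some (Sum.inl i), some (Sum.inr j) => i ≤ j
    | some (Sum.inr _), some (Sum.inr _) => True
    | _, _ => False


private lemma lineK2_adj' {n : ℕ} (a b : Fin 2) (i j : Fin n) :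
    (lineK2 n).Adj (a, i) (b, j) ↔ ((a = b ∧ i ≠ j) ∨ (a ≠ b ∧ i = j)) := by
  simp only [lineK2, SimpleGraph.fromRel_adj, ne_eq, Prod.mk.injEq, not_and]
  constructor
  · rintro ⟨h, hr⟩
    rcases hr with (h' | h') | (h' | h')
    · exact Or.inl ⟨h', fun hij => h h' hij⟩
    · exact Or.inr ⟨fun hab => h hab h', h'⟩
    · exact Or.inl ⟨h'.symm, fun hij => h h'.symm hij⟩
    · exact Or.inr ⟨fun hab => h hab h'.symm, h'.symm⟩
  · rintro (⟨hab, hij⟩ | ⟨hab, hij⟩)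
    · exact ⟨fun _ h => hij h, Or.inl (Or.inl hab)⟩
    · exact ⟨fun h _ => hab h, Or.inl (Or.inr hij)⟩

private lemma mem_of_mixed {V : Type*} [Fintype V] {G : SimpleGraph V} {X : Finset V}
    (hhom : ∀ v ∉ X, (∀ x ∈ X, G.Adj v x) ∨ (∀ x ∈ X, ¬ G.Adj v x))
    {x y v : V} (hx : x ∈ X) (hy : y ∈ X) (hvx : G.Adj v x) (hvy : ¬ G.Adj v y) : v ∈ X := by
  by_contra h
  rcases hhom v h with h' | h'
  · exact hvy (h' y hy)
  · exact h' x hx hvx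

theorem lineK2_prime (n : ℕ) (hn : 3 ≤ n) : IsPrimeGraph (lineK2 n) := by
  rintro ⟨X, h2, hlt, hhom⟩
  obtain ⟨m, rfl⟩ : ∃ m, n = m + 3 := ⟨n - 3, by omega⟩
  have fin2 : ∀ a b c : Fin 2, a ≠ b → c = a ∨ c = b := by decide
  -- if both vertices of a column are in X, then every vertex of another column is in X
  have hcol : ∀ (i : Fin (m+3)) (a b : Fin 2), a ≠ b → (a, i) ∈ X → (b, i) ∈ X →
      ∀ (c : Fin 2) (k : Fin (m+3)), k ≠ i → (c, k) ∈ X := by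
    intro i a b hab ha hb c k hk
    rcases fin2 a b c hab with hc | hc
    · subst hc
      exact mem_of_mixed hhom ha hb ((lineK2_adj' _ _ _ _).2 (Or.inl ⟨rfl, hk⟩))
        (fun h => by rcases (lineK2_adj' _ _ _ _).1 h with ⟨h1, _⟩ | ⟨_, h2⟩
                     exacts [hab h1, hk h2])
    · subst hc
      exact mem_of_mixed hhom hb ha ((lineK2_adj' _ _ _ _).2 (Or.inl ⟨rfl, hk⟩))
        (fun h => by rcases (lineK2_adj' _ _ _ _).1 h with ⟨h1, _⟩ | ⟨_, h2⟩
                     exacts [hab h1.symm, hk h2])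
  -- hence no column has both its vertices in X
  have nopair : ∀ (i : Fin (m+3)) (a b : Fin 2), a ≠ b → (a, i) ∈ X → (b, i) ∈ X → False := by
    intro i a b hab ha hb
    obtain ⟨j, hj⟩ : ∃ j : Fin (m+3), j ≠ i := by
      rcases eq_or_ne i 0 with h | h
      · exact ⟨1, by simp [h]⟩
      · exact ⟨0, fun he => h he.symm⟩
    have h0 : ((0 : Fin 2), j) ∈ X := hcol i a b hab ha hb 0 j hj
    have h1 : ((1 : Fin 2), j) ∈ X := hcol i a b hab ha hb 1 j hj
    have hall : ∀ w : Fin 2 × Fin (m+3), w ∈ X := by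
      intro ⟨c, k⟩
      rcases eq_or_ne k i with hk | hk
      · exact hcol j 0 1 (by decide) h0 h1 c k (hk ▸ fun he => hj he.symm)
      · exact hcol i a b hab ha hb c k hk
    have : X = Finset.univ := Finset.eq_univ_iff_forall.mpr hall
    rw [this, Finset.card_univ] at hlt
    exact lt_irrefl _ hlt
  -- now take two distinct vertices of X
  obtain ⟨x, hx, y, hy, hxy⟩ := Finset.one_lt_card.mp h2
  obtain ⟨a, i⟩ := x
  obtain ⟨b, j⟩ := y
  by_cases hij : i = j
  · subst hij
    exact nopair i a b (fun h => hxy (by rw [h])) hx hy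
  · by_cases hab : a = b
    · subst hab
      set c : Fin 2 := if a = 0 then 1 else 0 with hc
      have hca : c ≠ a := by rcases fin2 0 1 a (by decide) with h | h <;> simp [hc, h]
      have hv : (c, i) ∈ X :=
        mem_of_mixed hhom hx hy ((lineK2_adj' _ _ _ _).2 (Or.inr ⟨hca, rfl⟩))
          (fun h => by rcases (lineK2_adj' _ _ _ _).1 h with ⟨h1, _⟩ | ⟨_, h2⟩
                       exacts [hca h1, hij h2])
      exact nopair i c a hca hv hx
    · obtain ⟨k, hki, hkj⟩ : ∃ k : Fin (m+3), k ≠ i ∧ k ≠ j := by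
        have h : (({i, j} : Finset (Fin (m+3)))ᶜ).Nonempty := by
          rw [← Finset.card_pos, Finset.card_compl]
          have h1 : ({i, j} : Finset (Fin (m+3))).card ≤ 2 := Finset.card_le_two ..
          simp only [Fintype.card_fin]
          omega
        obtain ⟨k, hk⟩ := h
        simp only [Finset.mem_compl, Finset.mem_insert, Finset.mem_singleton, not_or] at hk
        exact ⟨k, hk⟩
      have hv : (a, k) ∈ X :=
        mem_of_mixed hhom hx hy ((lineK2_adj' _ _ _ _).2 (Or.inl ⟨rfl, hki⟩))
          (fun h => by rcases (lineK2_adj' _ _ _ _).1 h with ⟨h1, _⟩ | ⟨_, h2⟩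
                       exacts [hab h1, hkj h2])
      have hw : (b, k) ∈ X :=
        mem_of_mixed hhom hy hx ((lineK2_adj' _ _ _ _).2 (Or.inl ⟨rfl, hkj⟩))
          (fun h => by rcases (lineK2_adj' _ _ _ _).1 h with ⟨h1, _⟩ | ⟨_, h2⟩
                       exacts [hab h1.symm, hki h2])
      exact nopair k a b hab hv hw
end

section
/- For every n ≥ 3, the half-graph of height n is prime. -/
theorem halfGraph_prime (n : ℕ) (hn : 3 ≤ n) : IsPrimeGraph (halfGraph n) := by
  rintro ⟨X, h2, hlt, hhom⟩
  have adj_vu : ∀ i j : Fin n, (halfGraph n).Adj (.inl i) (.inr j) ↔ i ≤ j := by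
    intro i j; simp [halfGraph, SimpleGraph.fromRel_adj]
  have adj_uv : ∀ i j : Fin n, (halfGraph n).Adj (.inr j) (.inl i) ↔ i ≤ j := by
    intro i j; rw [SimpleGraph.adj_comm]; exact adj_vu i j
  have nadj_vv : ∀ i j : Fin n, ¬ (halfGraph n).Adj (.inl i) (.inl j) := by
    intro i j; simp [halfGraph, SimpleGraph.fromRel_adj]
  have nadj_uu : ∀ i j : Fin n, ¬ (halfGraph n).Adj (.inr i) (.inr j) := by
    intro i j; simp [halfGraph, SimpleGraph.fromRel_adj]
  have key : ∀ a ∈ X, ∀ b ∈ X, ∀ c, (halfGraph n).Adj c a → ¬ (halfGraph n).Adj c b →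
      c ∈ X := by
    intro a ha b hb c hca hcb
    by_contra hc
    rcases hhom c hc with h | h
    · exact hcb (h b hb)
    · exact h a ha hca
  obtain ⟨a, ha, b, hb, hab⟩ := Finset.one_lt_card.mp h2
  set t : Fin n := ⟨n - 1, by omega⟩ with ht
  set z : Fin n := ⟨0, by omega⟩ with hz
  have le_top : ∀ i : Fin n, i ≤ t := by
    intro i; rw [Fin.le_def]; have := i.isLt; simp [ht]; omega
  have z_le : ∀ i : Fin n, z ≤ i := by
    intro i; rw [Fin.le_def]; simp [hz]
  -- Step 1: X contains some v_i and some u_k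
  have step1 : (∃ i, Sum.inl i ∈ X) ∧ (∃ k, (Sum.inr k : Fin n ⊕ Fin n) ∈ X) := by
    match a, b with
    | Sum.inl i, Sum.inl j =>
      refine ⟨⟨i, ha⟩, ?_⟩
      have hij : i ≠ j := by simpa using hab
      rcases lt_or_gt_of_ne hij with h | h
      · exact ⟨i, key _ ha _ hb _ ((adj_uv i i).2 le_rfl)
          (fun hc => not_le.2 h ((adj_uv j i).1 hc))⟩
      · exact ⟨j, key _ hb _ ha _ ((adj_uv j j).2 le_rfl)
          (fun hc => not_le.2 h ((adj_uv i j).1 hc))⟩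
    | Sum.inl i, Sum.inr j => exact ⟨⟨i, ha⟩, ⟨j, hb⟩⟩
    | Sum.inr i, Sum.inl j => exact ⟨⟨j, hb⟩, ⟨i, ha⟩⟩
    | Sum.inr i, Sum.inr j =>
      refine ⟨?_, ⟨i, ha⟩⟩
      have hij : i ≠ j := by simpa using hab
      rcases lt_or_gt_of_ne hij with h | h
      · exact ⟨j, key _ hb _ ha _ ((adj_vu j j).2 le_rfl)
          (fun hc => not_le.2 h ((adj_vu j i).1 hc))⟩
      · exact ⟨i, key _ ha _ hb _ ((adj_vu i i).2 le_rfl)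
          (fun hc => not_le.2 h ((adj_vu i j).1 hc))⟩
  obtain ⟨⟨i, hvi⟩, ⟨k, huk⟩⟩ := step1
  -- Step 2: u_t ∈ X
  have hutop : (Sum.inr t : Fin n ⊕ Fin n) ∈ X :=
    key _ hvi _ huk _ ((adj_uv i t).2 (le_top i)) (nadj_uu t k)
  -- Step 3: v_z ∈ X
  have hv0 : (Sum.inl z : Fin n ⊕ Fin n) ∈ X :=
    key _ hutop _ hvi _ ((adj_vu z t).2 (le_top z)) (nadj_vv z i)
  -- Step 4: everything is in X
  have hall : ∀ x : Fin n ⊕ Fin n, x ∈ X := by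
    rintro (j | j)
    · exact key _ hutop _ hv0 _ ((adj_vu j t).2 (le_top j)) (nadj_vv j z)
    · exact key _ hv0 _ hutop _ ((adj_uv z j).2 (z_le j)) (nadj_uu j t)
  have : X = Finset.univ := Finset.eq_univ_iff_forall.2 hall
  rw [this, Finset.card_univ] at hlt
  exact lt_irrefl _ hlt
end

section
/- For every n ≥ 3, the graph H*_n is prime. -/
open Sum in
lemma hstar_adj_wv {n : ℕ} (i : Fin n) :
    (HStarG n).Adj none (some (inl i)) ↔ (i : ℕ) = 0 := by
  simp [HStarG, SimpleGraph.fromRel_adj]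

open Sum in
lemma hstar_adj_vu {n : ℕ} (i j : Fin n) :
    (HStarG n).Adj (some (inl i)) (some (inr j)) ↔ i ≤ j := by
  simp [HStarG, SimpleGraph.fromRel_adj]

open Sum in
lemma hstar_adj_uu {n : ℕ} (i j : Fin n) :
    (HStarG n).Adj (some (inr i)) (some (inr j)) ↔ i ≠ j := by
  simp [HStarG, SimpleGraph.fromRel_adj]

open Sum in
lemma hstar_adj_vv {n : ℕ} (i j : Fin n) :
    ¬ (HStarG n).Adj (some (inl i)) (some (inl j)) := by
  simp [HStarG, SimpleGraph.fromRel_adj]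

open Sum in
lemma hstar_adj_wu {n : ℕ} (i : Fin n) :
    ¬ (HStarG n).Adj none (some (inr i)) := by
  simp [HStarG, SimpleGraph.fromRel_adj]

theorem HStarG_prime (n : ℕ) (hn : 3 ≤ n) : IsPrimeGraph (HStarG n) := by
  rintro ⟨X, h2, hlt, hX⟩
  set G := HStarG n with hG
  -- distinguisher lemma
  have key : ∀ z a b, a ∈ X → b ∈ X → G.Adj z a → ¬ G.Adj z b → z ∈ X := by
    intro z a b ha hb hza hzb
    by_contra hz
    rcases hX z hz with h | h
    · exact hzb (h b hb)
    · exact h a ha hza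
  -- special indices
  have h0 : (0 : ℕ) < n := by omega
  have h1 : (1 : ℕ) < n := by omega
  set z0 : Fin n := ⟨0, h0⟩ with hz0
  set z1 : Fin n := ⟨1, h1⟩ with hz1
  -- If w ∈ X and some u_i ∈ X, then X = univ, contradiction
  have final : ∀ i : Fin n, none ∈ X → some (Sum.inr i) ∈ X → False := by
    intro i hw hu
    have allu : ∀ k : Fin n, some (Sum.inr k) ∈ X := by
      intro k
      by_cases hk : k = i
      · exact hk ▸ hu
      · exact key _ _ none hu hw ((hstar_adj_uu k i).mpr hk) (hstar_adj_wu k ∘ G.adj_symm)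
    have hv1 : some (Sum.inl z1) ∈ X := by
      refine key _ _ none (allu z1) hw ((hstar_adj_vu z1 z1).mpr le_rfl) ?_
      intro h
      have := (hstar_adj_wv z1).mp h.symm
      simp [hz1] at this
    have allv : ∀ k : Fin n, some (Sum.inl k) ∈ X := by
      intro k
      exact key _ _ (some (Sum.inl z1)) (allu k) hv1
        ((hstar_adj_vu k k).mpr le_rfl) (hstar_adj_vv k z1)
    have : X = Finset.univ := by
      apply Finset.eq_univ_iff_forall.mpr
      rintro (_ | (k | k))
      · exact hw
      · exact allv k
      · exact allu k
    rw [this] at hlt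
    simp [Finset.card_univ] at hlt
  -- If some v_i ∈ X and some u_j ∈ X, contradiction
  have mix : ∀ i j : Fin n, some (Sum.inl i) ∈ X → some (Sum.inr j) ∈ X → False := by
    intro i j hv hu
    have hv0 : some (Sum.inl z0) ∈ X :=
      key _ _ (some (Sum.inl i)) hu hv ((hstar_adj_vu z0 j).mpr (Fin.mk_le_mk.mpr (Nat.zero_le _)))
        (hstar_adj_vv z0 i)
    have hw : none ∈ X := by
      refine key _ _ (some (Sum.inr j)) hv0 hu ((hstar_adj_wv z0).mpr rfl) (hstar_adj_wu j)
    exact final j hw hu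
  -- If w ∈ X and some v_i ∈ X, contradiction
  have wv : ∀ i : Fin n, none ∈ X → some (Sum.inl i) ∈ X → False := by
    intro i hw hv
    have hu : some (Sum.inr i) ∈ X := by
      refine key _ _ none hv hw ?_ ?_
      · exact ((hstar_adj_vu i i).mpr le_rfl).symm
      · exact fun h => hstar_adj_wu i h.symm
    exact final i hw hu
  -- two u's with i < j give a v
  have uu : ∀ i j : Fin n, i < j → some (Sum.inr i) ∈ X → some (Sum.inr j) ∈ X → False := by
    intro i j hij hui huj
    have hv : some (Sum.inl j) ∈ X := by
      refine key _ _ (some (Sum.inr i)) huj hui ((hstar_adj_vu j j).mpr le_rfl) ?_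
      intro h
      exact absurd ((hstar_adj_vu j i).mp h) (not_le.mpr hij)
    exact mix j j hv huj
  -- two v's with i < j give a u
  have vv : ∀ i j : Fin n, i < j → some (Sum.inl i) ∈ X → some (Sum.inl j) ∈ X → False := by
    intro i j hij hvi hvj
    have hu : some (Sum.inr i) ∈ X := by
      refine key _ _ (some (Sum.inl j)) hvi hvj ((hstar_adj_vu i i).mpr le_rfl).symm ?_
      intro h
      exact absurd ((hstar_adj_vu j i).mp h.symm) (not_le.mpr hij)
    exact mix i i hvi hu
  -- get two distinct members of X
  obtain ⟨a, ha, b, hb, hab⟩ := Finset.one_lt_card.mp h2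
  match a, b with
  | none, none => exact hab rfl
  | none, some (Sum.inl j) => exact wv j ha hb
  | none, some (Sum.inr j) => exact final j ha hb
  | some (Sum.inl i), none => exact wv i hb ha
  | some (Sum.inr i), none => exact final i hb ha
  | some (Sum.inl i), some (Sum.inr j) => exact mix i j ha hb
  | some (Sum.inr i), some (Sum.inl j) => exact mix j i hb ha
  | some (Sum.inl i), some (Sum.inl j) =>
    have hij : i ≠ j := fun h => hab (by rw [h])
    rcases hij.lt_or_gt with h | h
    · exact vv i j h ha hb
    · exact vv j i h hb ha
  | some (Sum.inr i), some (Sum.inr j) =>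
    have hij : i ≠ j := fun h => hab (by rw [h])
    rcases hij.lt_or_gt with h | h
    · exact uu i j h ha hb
    · exact uu j i h hb ha
end

section
/- For every n ≥ 3, the graph H'_{n,I} is prime. -/
section HPrimeAux
variable {n : ℕ}

lemma hp_wv (i : Fin n) : (HPrimeG n).Adj none (some (Sum.inl i)) := by
  simp [HPrimeG, SimpleGraph.fromRel_adj]

lemma hp_vu (i j : Fin n) : (HPrimeG n).Adj (some (Sum.inl i)) (some (Sum.inr j)) ↔ i ≤ j := by
  simp [HPrimeG, SimpleGraph.fromRel_adj]

lemma hp_nwu (j : Fin n) : ¬ (HPrimeG n).Adj none (some (Sum.inr j)) := by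
  simp [HPrimeG, SimpleGraph.fromRel_adj]

lemma hp_nvv (i k : Fin n) : ¬ (HPrimeG n).Adj (some (Sum.inl i)) (some (Sum.inl k)) := by
  simp [HPrimeG, SimpleGraph.fromRel_adj]

lemma hp_uu {j k : Fin n} (h : j ≠ k) : (HPrimeG n).Adj (some (Sum.inr j)) (some (Sum.inr k)) := by
  simp [HPrimeG, SimpleGraph.fromRel_adj, h]

variable {X : Finset (Option (Fin n ⊕ Fin n))}
variable (hX : ∀ v ∉ X, (∀ x ∈ X, (HPrimeG n).Adj v x) ∨ (∀ x ∈ X, ¬ (HPrimeG n).Adj v x))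

include hX in
lemma hp_step {a b c : Option (Fin n ⊕ Fin n)} (ha : a ∈ X) (hb : b ∈ X)
    (hca : (HPrimeG n).Adj c a) (hcb : ¬ (HPrimeG n).Adj c b) : c ∈ X := by
  by_contra hc
  rcases hX c hc with h | h
  · exact hcb (h b hb)
  · exact h a ha hca

include hX in
lemma hp_wIn {i j : Fin n} (hv : some (Sum.inl i) ∈ X) (hu : some (Sum.inr j) ∈ X) :
    none ∈ X :=
  hp_step hX hv hu (hp_wv i) (hp_nwu j)

include hX in
lemma hp_allIn {i : Fin n} (hn : 3 ≤ n) (hw : none ∈ X) (hv : some (Sum.inl i) ∈ X) :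
    ∀ x, x ∈ X := by
  have hV : ∀ k : Fin n, some (Sum.inl k) ∈ X := by
    intro k
    by_cases hk : k = i
    · subst hk; exact hv
    · exact hp_step hX hw hv ((HPrimeG n).adj_symm (hp_wv k)) (hp_nvv k i)
  have hU : ∀ j : Fin n, some (Sum.inr j) ∈ X := by
    intro j
    refine hp_step hX (hV ⟨0, by omega⟩) hw ?_ ?_
    · exact ((HPrimeG n).adj_symm ((hp_vu _ _).2 (by exact Fin.mk_le_mk.2 (Nat.zero_le _))))
    · intro h; exact hp_nwu j ((HPrimeG n).adj_symm h)
  rintro (_ | (k | j))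
  · exact hw
  · exact hV k
  · exact hU j

end HPrimeAux

theorem HPrimeG_prime (n : ℕ) (hn : 3 ≤ n) : IsPrimeGraph (HPrimeG n) := by
  rintro ⟨X, h2, hlt, hX⟩
  suffices hall : ∀ x, x ∈ X by
    have : X = Finset.univ := Finset.eq_univ_iff_forall.2 hall
    rw [this, Finset.card_univ] at hlt
    exact lt_irrefl _ hlt
  obtain ⟨a, ha, b, hb, hab⟩ := Finset.one_lt_card.1 h2
  have key : ∀ i : Fin n, some (Sum.inl i) ∈ X → none ∈ X → ∀ x, x ∈ X :=
    fun i hv hw => hp_allIn hX hn hw hv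
  have pairVV : ∀ i k : Fin n, i ≠ k → some (Sum.inl i) ∈ X → some (Sum.inl k) ∈ X →
      ∀ x, x ∈ X := by
    intro i k hik hi hk
    rcases lt_or_gt_of_ne hik with h | h
    · have hu : some (Sum.inr i) ∈ X :=
        hp_step hX hi hk ((HPrimeG n).adj_symm ((hp_vu i i).2 le_rfl))
          (fun hc => absurd ((hp_vu k i).1 ((HPrimeG n).adj_symm hc)) (not_le.2 h))
      exact key i hi (hp_wIn hX hi hu)
    · have hu : some (Sum.inr k) ∈ X :=
        hp_step hX hk hi ((HPrimeG n).adj_symm ((hp_vu k k).2 le_rfl))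
          (fun hc => absurd ((hp_vu i k).1 ((HPrimeG n).adj_symm hc)) (not_le.2 h))
      exact key k hk (hp_wIn hX hk hu)
  have pairVU : ∀ i j : Fin n, some (Sum.inl i) ∈ X → some (Sum.inr j) ∈ X → ∀ x, x ∈ X :=
    fun i j hi hj => key i hi (hp_wIn hX hi hj)
  have pairUU : ∀ j k : Fin n, j ≠ k → some (Sum.inr j) ∈ X → some (Sum.inr k) ∈ X →
      ∀ x, x ∈ X := by
    intro j k hjk hj hk
    rcases lt_or_gt_of_ne hjk with h | h
    · have hv : some (Sum.inl k) ∈ X :=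
        hp_step hX hk hj ((hp_vu k k).2 le_rfl)
          (fun hc => absurd ((hp_vu k j).1 hc) (not_le.2 h))
      exact pairVU k k hv hk
    · have hv : some (Sum.inl j) ∈ X :=
        hp_step hX hj hk ((hp_vu j j).2 le_rfl)
          (fun hc => absurd ((hp_vu j k).1 hc) (not_le.2 h))
      exact pairVU j j hv hj
  have pairWU : ∀ j : Fin n, none ∈ X → some (Sum.inr j) ∈ X → ∀ x, x ∈ X := by
    intro j hw hj
    have hU : ∀ k : Fin n, some (Sum.inr k) ∈ X := by
      intro k
      by_cases hk : k = j
      · subst hk; exact hj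
      · exact hp_step hX hj hw (hp_uu hk) (fun hc => hp_nwu k ((HPrimeG n).adj_symm hc))
    have h1 : some (Sum.inl (⟨1, by omega⟩ : Fin n)) ∈ X := by
      refine hp_step hX (hU ⟨n-1, by omega⟩) (hU ⟨0, by omega⟩) ?_ ?_
      · exact (hp_vu _ _).2 (Fin.mk_le_mk.2 (by omega))
      · intro hc
        have := (hp_vu _ _).1 hc
        simp [Fin.mk_le_mk] at this
    exact key _ h1 hw
  rcases a with _ | (i | j) <;> rcases b with _ | (k | l)
  · exact absurd rfl hab
  · exact key k hb ha
  · exact pairWU l ha hb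
  · exact key i ha hb
  · exact pairVV i k (fun h => hab (by rw [h])) ha hb
  · exact pairVU i l ha hb
  · exact pairWU j hb ha
  · exact pairVU k j hb ha
  · exact pairUU j l (fun h => hab (by rw [h])) ha hb
end

section
/- Every chain of length n > 3 contains a chain of length n−1 whose induced graph is prime. More precisely, if v_0, v_1, …, v_n is a chain in a graph G with n > 3, then the graph induced on {v_1,…,v_n} or the graph induced on {v_0, v_2, v_3, …, v_n} (suitably re-indexed as a chain) is prime. -/
/-- `v 0, v 1, …, v n` is a chain in `G`: the vertices are distinct and for each
`2 ≤ i ≤ n`, `v i` is adjacent to all of `v 0, …, v (i-2)` but not to `v (i-1)`,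
or non-adjacent to all of `v 0, …, v (i-2)` but adjacent to `v (i-1)`. -/
def IsChainOn {V : Type*} (G : SimpleGraph V) (n : ℕ) (v : ℕ → V) : Prop :=
  (∀ i ≤ n, ∀ j ≤ n, v i = v j → i = j) ∧
  ∀ i, 2 ≤ i → i ≤ n →
    ((∀ j, j ≤ i - 2 → G.Adj (v i) (v j)) ∧ ¬ G.Adj (v i) (v (i - 1))) ∨
    ((∀ j, j ≤ i - 2 → ¬ G.Adj (v i) (v j)) ∧ G.Adj (v i) (v (i - 1)))

section Aux

variable {V : Type*} [Fintype V] [DecidableEq V] (G : SimpleGraph V) (n : ℕ) (v : ℕ → V)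

lemma chain_L1 (hv : IsChainOn G n v) :
    ∀ i, 2 ≤ i → i ≤ n → ∀ j, j ≤ i - 2 → (G.Adj (v i) (v j) ↔ G.Adj (v i) (v 0)) := by
  intro i h2 hn j hj
  rcases hv.2 i h2 hn with ⟨h, _⟩ | ⟨h, _⟩
  · simp [h j hj, h 0 (Nat.zero_le _)]
  · simp [h j hj, h 0 (Nat.zero_le _)]

lemma chain_L2 (hv : IsChainOn G n v) :
    ∀ i, 2 ≤ i → i ≤ n → ∀ j, j = i - 1 → (G.Adj (v i) (v j) ↔ ¬ G.Adj (v i) (v 0)) := by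
  intro i h2 hn j hj
  subst hj
  rcases hv.2 i h2 hn with ⟨h, h'⟩ | ⟨h, h'⟩
  · simp [h', h 0 (Nat.zero_le _)]
  · simp [h', h 0 (Nat.zero_le _)]

/-- The pure index-level consequence of a homogeneous set. -/
def GoodT (I T : Finset ℕ) : Prop :=
  T ⊆ I ∧ 2 ≤ T.card ∧ T ≠ I ∧
    ∀ s ∈ I, s ∉ T → (∀ t ∈ T, G.Adj (v s) (v t)) ∨ (∀ t ∈ T, ¬ G.Adj (v s) (v t))

lemma transfer (hinj : ∀ i ≤ n, ∀ j ≤ n, v i = v j → i = j)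
    (I : Finset ℕ) (hI : I ⊆ Finset.Icc 0 n)
    (hh : ∃ X : Finset ↥(↑(I.image v) : Set V), IsHomogeneousSet (G.induce ↑(I.image v)) X) :
    ∃ T : Finset ℕ, GoodT G v I T := by
  obtain ⟨X, hc2, hclt, hhom⟩ := hh
  have hle : ∀ i ∈ I, i ≤ n := fun i hi => (Finset.mem_Icc.mp (hI hi)).2
  have hvinj : Set.InjOn v ↑I := fun i hi j hj h =>
    hinj i (hle i hi) j (hle j hj) h
  refine ⟨I.filter (fun i => v i ∈ X.image Subtype.val), Finset.filter_subset _ _, ?_, ?_, ?_⟩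
  case refine_3 =>
    intro s hs hsT
    have hvs : v s ∈ (↑(I.image v) : Set V) := by
      simp only [Finset.coe_image, Set.mem_image, Finset.mem_coe]
      exact ⟨s, hs, rfl⟩
    have hw : (⟨v s, hvs⟩ : ↥(↑(I.image v) : Set V)) ∉ X := by
      intro hmem
      exact hsT (Finset.mem_filter.mpr ⟨hs, Finset.mem_image.mpr ⟨_, hmem, rfl⟩⟩)
    rcases hhom _ hw with h | h
    · left
      intro t ht
      obtain ⟨ht, hvt⟩ := Finset.mem_filter.mp ht
      obtain ⟨x, hx, hxv⟩ := Finset.mem_image.mp hvt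
      have := h x hx
      rw [← hxv]
      exact this
    · right
      intro t ht
      obtain ⟨ht, hvt⟩ := Finset.mem_filter.mp ht
      obtain ⟨x, hx, hxv⟩ := Finset.mem_image.mp hvt
      have := h x hx
      rw [← hxv]
      exact this
  -- image identity
  all_goals
    have himg : (I.filter (fun i => v i ∈ X.image Subtype.val)).image v = X.image Subtype.val := by
      ext x
      constructor
      · intro hx
        obtain ⟨i, hi, rfl⟩ := Finset.mem_image.mp hx
        exact (Finset.mem_filter.mp hi).2
      · intro hx
        obtain ⟨w, hw, rfl⟩ := Finset.mem_image.mp hx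
        have hwS : (w : V) ∈ I.image v := by
          have := w.2
          simpa using this
        obtain ⟨i, hi, hvi⟩ := Finset.mem_image.mp hwS
        refine Finset.mem_image.mpr ⟨i, Finset.mem_filter.mpr ⟨hi, ?_⟩, hvi⟩
        rw [hvi]
        exact Finset.mem_image.mpr ⟨w, hw, rfl⟩
    have hcardX : (X.image Subtype.val).card = X.card :=
      Finset.card_image_of_injective X Subtype.val_injective
    have hcardT : ((I.filter (fun i => v i ∈ X.image Subtype.val)).image v).card
        = (I.filter (fun i => v i ∈ X.image Subtype.val)).card :=
      Finset.card_image_of_injOn (hvinj.mono (by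
        intro i hi
        exact Finset.filter_subset _ _ (by exact_mod_cast hi)))
  case refine_1 =>
    have h1 : ((I.filter (fun i => v i ∈ X.image Subtype.val)).image v).card
        = (X.image Subtype.val).card := by rw [himg]
    omega
  case refine_2 =>
    intro hTI
    have hSI : (I.image v).card = I.card := Finset.card_image_of_injOn hvinj
    have hcV : Fintype.card ↥(↑(I.image v) : Set V) = (I.image v).card :=
      Fintype.card_coe _
    rw [hcV, hSI] at hclt
    have h1 : ((I.filter (fun i => v i ∈ X.image Subtype.val)).image v).card
        = (X.image Subtype.val).card := by rw [himg]
    have h2 : (I.filter (fun i => v i ∈ X.image Subtype.val)).card = I.card := by rw [hTI]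
    omega

lemma uni_of_good {I T : Finset ℕ} (hT : GoodT G v I T) :
    ∀ s ∈ I, s ∉ T → ∀ t₁ ∈ T, ∀ t₂ ∈ T, (G.Adj (v s) (v t₁) ↔ G.Adj (v s) (v t₂)) := by
  intro s hs hsT t₁ h1 t₂ h2
  rcases hT.2.2.2 s hs hsT with h | h
  · simp [h t₁ h1, h t₂ h2]
  · simp [h t₁ h1, h t₂ h2]

lemma lemA (hv : IsChainOn G n v) (hn : 3 < n) (T : Finset ℕ)
    (hT : GoodT G v (Finset.Icc 1 n) T) :
    (G.Adj (v n) (v 0) ↔ ¬ G.Adj (v 2) (v 0)) := by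
  have uni := uni_of_good G v hT
  obtain ⟨hsub, hcard, hne, _⟩ := hT
  have L1 := chain_L1 G n v hv
  have L2 := chain_L2 G n v hv
  have hTne : T.Nonempty := Finset.card_pos.mp (by omega)
  set a := T.min' hTne with ha
  set m := T.max' hTne with hm
  have haT : a ∈ T := T.min'_mem hTne
  have hmT : m ∈ T := T.max'_mem hTne
  have ham : a < m := T.min'_lt_max'_of_card (by omega)
  have hmemI : ∀ t ∈ T, 1 ≤ t ∧ t ≤ n := fun t ht => Finset.mem_Icc.mp (hsub ht)
  have haI := hmemI a haT
  have hmI := hmemI m hmT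
  -- Step 1 : n ∈ T
  have hnT : n ∈ T := by
    by_contra hnn
    have hmn : m < n := lt_of_le_of_ne hmI.2 (by rintro rfl; exact hnn hmT)
    have hs : m + 1 ∈ Finset.Icc 1 n := Finset.mem_Icc.mpr ⟨by omega, by omega⟩
    have hsT : m + 1 ∉ T := fun h => by have := T.le_max' _ h; omega
    have key := uni (m+1) hs hsT a haT m hmT
    rw [L1 (m+1) (by omega) (by omega) a (by omega),
        L2 (m+1) (by omega) (by omega) m (by omega)] at key
    tauto
  -- Step 2 : 1 ∈ T ∨ 2 ∈ T
  have h12 : 1 ∈ T ∨ 2 ∈ T := by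
    by_contra h
    push_neg at h
    have ha3 : 3 ≤ a := by
      by_contra h3
      have haI1 := haI.1
      have : a = 1 ∨ a = 2 := by omega
      rcases this with h' | h'
      · exact h.1 (h' ▸ haT)
      · exact h.2 (h' ▸ haT)
    have han : a < n := lt_of_lt_of_le ham hmI.2
    have hs1 : a - 1 ∈ Finset.Icc 1 n := Finset.mem_Icc.mpr ⟨by omega, by omega⟩
    have hs1T : a - 1 ∉ T := fun hh => by have := T.min'_le _ hh; omega
    have k1 := uni (a-1) hs1 hs1T a haT n hnT
    rw [G.adj_comm (v (a-1)) (v a), G.adj_comm (v (a-1)) (v n),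
        L2 a (by omega) (by omega) (a-1) (by omega),
        L1 n (by omega) (le_refl n) (a-1) (by omega)] at k1
    have hs2 : a - 2 ∈ Finset.Icc 1 n := Finset.mem_Icc.mpr ⟨by omega, by omega⟩
    have hs2T : a - 2 ∉ T := fun hh => by have := T.min'_le _ hh; omega
    have k2 := uni (a-2) hs2 hs2T a haT n hnT
    rw [G.adj_comm (v (a-2)) (v a), G.adj_comm (v (a-2)) (v n),
        L1 a (by omega) (by omega) (a-2) (by omega),
        L1 n (by omega) (le_refl n) (a-2) (by omega)] at k2
    tauto
  -- Step 3 : not both 1 and 2 in T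
  have hnotboth : ¬ (1 ∈ T ∧ 2 ∈ T) := by
    rintro ⟨h1, h2⟩
    have hall : ∀ s, 1 ≤ s → s ≤ n → s ∈ T := by
      intro s
      induction s using Nat.strong_induction_on with
      | _ s ih =>
        intro hs1 hsn
        rcases Nat.lt_or_ge s 3 with h3 | h3
        · have : s = 1 ∨ s = 2 := by omega
          rcases this with h' | h'
          · exact h' ▸ h1
          · exact h' ▸ h2
        · by_contra hsT
          have hp1 : s - 1 ∈ T := ih (s-1) (by omega) (by omega) (by omega)
          have hp2 : s - 2 ∈ T := ih (s-2) (by omega) (by omega) (by omega)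
          have key := uni s (Finset.mem_Icc.mpr ⟨hs1, hsn⟩) hsT (s-1) hp1 (s-2) hp2
          rw [L2 s (by omega) (by omega) (s-1) (by omega),
              L1 s (by omega) (by omega) (s-2) (by omega)] at key
          tauto
    apply hne
    apply Finset.Subset.antisymm hsub
    intro s hs
    obtain ⟨hs1, hsn⟩ := Finset.mem_Icc.mp hs
    exact hall s hs1 hsn
  -- Conclusion
  rcases h12 with h1 | h2
  · have h2 : 2 ∉ T := fun h => hnotboth ⟨h1, h⟩
    have key := uni 2 (Finset.mem_Icc.mpr ⟨by omega, by omega⟩) h2 1 h1 n hnT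
    rw [G.adj_comm (v 2) (v n),
        L2 2 (le_refl 2) (by omega) 1 (by omega),
        L1 n (by omega) (le_refl n) 2 (by omega)] at key
    tauto
  · have h1 : 1 ∉ T := fun h => hnotboth ⟨h, h2⟩
    have key := uni 1 (Finset.mem_Icc.mpr ⟨le_refl 1, by omega⟩) h1 2 h2 n hnT
    rw [G.adj_comm (v 1) (v 2), G.adj_comm (v 1) (v n),
        L2 2 (le_refl 2) (by omega) 1 (by omega),
        L1 n (by omega) (le_refl n) 1 (by omega)] at key
    tauto

lemma lemB (hv : IsChainOn G n v) (hn : 3 < n) (T : Finset ℕ)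
    (hT : GoodT G v (insert 0 (Finset.Icc 2 n)) T) :
    (G.Adj (v n) (v 0) ↔ G.Adj (v 2) (v 0)) := by
  have uni := uni_of_good G v hT
  obtain ⟨hsub, hcard, hne, _⟩ := hT
  have L1 := chain_L1 G n v hv
  have L2 := chain_L2 G n v hv
  have hTne : T.Nonempty := Finset.card_pos.mp (by omega)
  set a := T.min' hTne with ha
  set m := T.max' hTne with hm
  have haT : a ∈ T := T.min'_mem hTne
  have hmT : m ∈ T := T.max'_mem hTne
  have ham : a < m := T.min'_lt_max'_of_card (by omega)
  have hmemI : ∀ t ∈ T, (t = 0 ∨ 2 ≤ t) ∧ t ≤ n := by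
    intro t ht
    have := hsub ht
    simp only [Finset.mem_insert, Finset.mem_Icc] at this
    omega
  have haI := hmemI a haT
  have hmI := hmemI m hmT
  have hmemI' : ∀ s, (s = 0 ∨ 2 ≤ s) → s ≤ n → s ∈ insert 0 (Finset.Icc 2 n) := by
    intro s h1 h2
    simp only [Finset.mem_insert, Finset.mem_Icc]
    omega
  -- Step 1 : n ∈ T
  have hnT : n ∈ T := by
    by_contra hnn
    have hmn : m < n := lt_of_le_of_ne hmI.2 (by rintro rfl; exact hnn hmT)
    have hm2 : 2 ≤ m := by omega
    have hsT : m + 1 ∉ T := fun h => by have := T.le_max' _ h; omega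
    have key := uni (m+1) (hmemI' (m+1) (by omega) (by omega)) hsT a haT m hmT
    rw [L1 (m+1) (by omega) (by omega) a (by omega),
        L2 (m+1) (by omega) (by omega) m (by omega)] at key
    tauto
  -- Step 2 : 0 ∈ T ∨ 2 ∈ T
  have h02 : 0 ∈ T ∨ 2 ∈ T := by
    by_contra h
    push_neg at h
    have ha3 : 3 ≤ a := by
      rcases haI.1 with h0 | h2'
      · exact absurd (h0 ▸ haT) h.1
      · by_contra h3
        have : a = 2 := by omega
        exact h.2 (this ▸ haT)
    have han : a < n := lt_of_lt_of_le ham hmI.2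
    have hs1T : a - 1 ∉ T := fun hh => by have := T.min'_le _ hh; omega
    have k1 := uni (a-1) (hmemI' (a-1) (by omega) (by omega)) hs1T a haT n hnT
    rw [G.adj_comm (v (a-1)) (v a), G.adj_comm (v (a-1)) (v n),
        L2 a (by omega) (by omega) (a-1) (by omega),
        L1 n (by omega) (le_refl n) (a-1) (by omega)] at k1
    rcases Nat.lt_or_ge a 4 with h4 | h4
    · -- a = 3, use s = 0
      have ha3' : a = 3 := by omega
      have hs0T : 0 ∉ T := h.1
      have k2 := uni 0 (hmemI' 0 (by omega) (by omega)) hs0T a haT n hnT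
      rw [G.adj_comm (v 0) (v a), G.adj_comm (v 0) (v n),
          L1 a (by omega) (by omega) 0 (by omega)] at k2
      rw [L1 n (by omega) (le_refl n) 0 (by omega)] at k2
      tauto
    · have hs2T : a - 2 ∉ T := fun hh => by have := T.min'_le _ hh; omega
      have k2 := uni (a-2) (hmemI' (a-2) (by omega) (by omega)) hs2T a haT n hnT
      rw [G.adj_comm (v (a-2)) (v a), G.adj_comm (v (a-2)) (v n),
          L1 a (by omega) (by omega) (a-2) (by omega),
          L1 n (by omega) (le_refl n) (a-2) (by omega)] at k2
      tauto
  -- Step 3 : not both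
  have hnotboth : ¬ (0 ∈ T ∧ 2 ∈ T) := by
    rintro ⟨h0, h2⟩
    have hall : ∀ s, 2 ≤ s → s ≤ n → s ∈ T := by
      intro s
      induction s using Nat.strong_induction_on with
      | _ s ih =>
        intro hs2 hsn
        rcases Nat.lt_or_ge s 3 with h3 | h3
        · have : s = 2 := by omega
          exact this ▸ h2
        · by_contra hsT
          rcases Nat.lt_or_ge s 4 with h4 | h4
          · -- s = 3 : use t = 2 and t = 0
            have hs3 : s = 3 := by omega
            have key := uni s (hmemI' s (by omega) hsn) hsT 2 h2 0 h0
            rw [hs3] at key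
            rw [L2 3 (by omega) (by omega) 2 (by omega),
                L1 3 (by omega) (by omega) 0 (by omega)] at key
            tauto
          · have hp1 : s - 1 ∈ T := ih (s-1) (by omega) (by omega) (by omega)
            have hp2 : s - 2 ∈ T := ih (s-2) (by omega) (by omega) (by omega)
            have key := uni s (hmemI' s (by omega) hsn) hsT (s-1) hp1 (s-2) hp2
            rw [L2 s (by omega) (by omega) (s-1) (by omega),
                L1 s (by omega) (by omega) (s-2) (by omega)] at key
            tauto
    apply hne
    apply Finset.Subset.antisymm hsub
    intro s hs
    simp only [Finset.mem_insert, Finset.mem_Icc] at hs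
    rcases hs with rfl | ⟨hs2, hsn⟩
    · exact h0
    · exact hall s hs2 hsn
  -- Conclusion
  rcases h02 with h0 | h2
  · have h2 : 2 ∉ T := fun h => hnotboth ⟨h0, h⟩
    have key := uni 2 (hmemI' 2 (by omega) (by omega)) h2 0 h0 n hnT
    rw [G.adj_comm (v 2) (v n), L1 n (by omega) (le_refl n) 2 (by omega)] at key
    tauto
  · have h0 : 0 ∉ T := fun h => hnotboth ⟨h, h2⟩
    have key := uni 0 (hmemI' 0 (by omega) (by omega)) h0 2 h2 n hnT
    rw [G.adj_comm (v 0) (v 2), G.adj_comm (v 0) (v n)] at key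
    tauto

end Aux

/-- Every chain of length `n > 3` contains a chain of length `n-1` inducing a prime graph:
the graph induced on `{v 1, …, v n}` or on `{v 0, v 2, …, v n}` is prime. -/
theorem chain_contains_prime_chain {V : Type*} [Fintype V] [DecidableEq V]
    (G : SimpleGraph V) (n : ℕ) (hn : 3 < n) (v : ℕ → V) (hv : IsChainOn G n v) :
    IsPrimeGraph (G.induce ↑((Finset.Icc 1 n).image v)) ∨
    IsPrimeGraph (G.induce ↑(insert (v 0) ((Finset.Icc 2 n).image v))) := by
  classical
  by_cases hA : IsPrimeGraph (G.induce ↑((Finset.Icc 1 n).image v))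
  · exact Or.inl hA
  · right
    have hBeq : insert (v 0) ((Finset.Icc 2 n).image v)
        = (insert 0 (Finset.Icc 2 n)).image v := (Finset.image_insert v 0 _).symm
    rw [hBeq]
    rintro ⟨Y, hY⟩
    have hX : ∃ X : Finset ↥(↑((Finset.Icc 1 n).image v) : Set V),
        IsHomogeneousSet (G.induce ↑((Finset.Icc 1 n).image v)) X := not_not.mp hA
    obtain ⟨TA, hTA⟩ := transfer G n v hv.1 (Finset.Icc 1 n)
      (fun i hi => by simp only [Finset.mem_Icc] at *; omega) hX
    obtain ⟨TB, hTB⟩ := transfer G n v hv.1 (insert 0 (Finset.Icc 2 n))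
      (fun i hi => by simp only [Finset.mem_insert, Finset.mem_Icc] at *; omega) ⟨Y, hY⟩
    have := lemA G n v hv hn TA hTA
    have := lemB G n v hv hn TB hTB
    tauto
end

section
/- Let L be a set of graphs each having at most n vertices, and let S be a (0,1)-string. If the graph induced by the string S^{2n−1} (the concatenation of 2n−1 copies of S) contains no graph of L as an induced subgraph, then for every positive integer k, the graph induced by S^k contains no graph of L as an induced subgraph. -/
/-- The graph encoded by a `(0,1)`-string `S = s₁ ⋯ s_m`, on vertices `v 0, …, v m`:
for `i < j`, `v i ~ v j` iff (`s_j = 0` and `i = j-1`) or (`s_j = 1` and `i ≠ j-1`),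
where `false` plays the role of `0` and `true` of `1`. -/
def stringGraph (S : List Bool) : SimpleGraph (Fin (S.length + 1)) :=
  SimpleGraph.fromRel fun i j =>
    (i : ℕ) < (j : ℕ) ∧ (S.getD ((j : ℕ) - 1) false = false ↔ (i : ℕ) = (j : ℕ) - 1)

/-- Gap-compression map: sends `c` to a smaller index, preserving residue mod `m`,
and preserving consecutiveness relative to members of `C`. -/
def psiAux (C : Finset ℕ) (m : ℕ) (c : ℕ) : ℕ :=
  if h : (C.filter (· < c)).Nonempty then
    have hp : (C.filter (· < c)).max' h < c := by
      have hmem := Finset.max'_mem _ h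
      simpa using (Finset.mem_filter.mp hmem).2
    (if c = (C.filter (· < c)).max' h + 1 then psiAux C m ((C.filter (· < c)).max' h) + 1
     else psiAux C m ((C.filter (· < c)).max' h) + (c - (C.filter (· < c)).max' h - 2) % m + 2)
  else c % m
termination_by c

lemma psiAux_eq (C : Finset ℕ) (m c : ℕ) :
    psiAux C m c =
      if h : (C.filter (· < c)).Nonempty then
        (if c = (C.filter (· < c)).max' h + 1 then psiAux C m ((C.filter (· < c)).max' h) + 1
         else psiAux C m ((C.filter (· < c)).max' h) + (c - (C.filter (· < c)).max' h - 2) % m + 2)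
      else c % m := by
  rw [psiAux]

lemma max'_lt (C : Finset ℕ) (c : ℕ) (h : (C.filter (· < c)).Nonempty) :
    (C.filter (· < c)).max' h < c := by
  have hmem := Finset.max'_mem _ h
  simpa using (Finset.mem_filter.mp hmem).2

lemma psiAux_modeq (C : Finset ℕ) (m : ℕ) : ∀ c, psiAux C m c ≡ c [MOD m] := by
  intro c
  induction c using Nat.strong_induction_on with
  | _ c ih =>
    rw [psiAux_eq]
    by_cases h : (C.filter (· < c)).Nonempty
    · rw [dif_pos h]
      have hpc : (C.filter (· < c)).max' h < c := max'_lt C c h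
      have ihp := ih _ hpc
      by_cases hc : c = (C.filter (· < c)).max' h + 1
      · rw [if_pos hc]
        have h2 := ihp.add_right 1
        rw [← hc] at h2
        exact h2
      · rw [if_neg hc]
        have h1 : psiAux C m ((C.filter (· < c)).max' h) + (c - (C.filter (· < c)).max' h - 2) % m + 2
            ≡ (C.filter (· < c)).max' h + (c - (C.filter (· < c)).max' h - 2) + 2 [MOD m] :=
          (ihp.add (Nat.mod_modEq _ m)).add_right 2
        have h3 : (C.filter (· < c)).max' h + (c - (C.filter (· < c)).max' h - 2) + 2 = c := by
          omega
        rw [h3] at h1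
        exact h1
    · rw [dif_neg h]
      exact Nat.mod_modEq c m

lemma psiAux_succ (C : Finset ℕ) (m : ℕ) {a : ℕ} (ha : a ∈ C) :
    psiAux C m (a + 1) = psiAux C m a + 1 := by
  have hne : (C.filter (· < a + 1)).Nonempty :=
    ⟨a, Finset.mem_filter.mpr ⟨ha, by simp⟩⟩
  have hmax : (C.filter (· < a + 1)).max' hne = a := by
    apply le_antisymm
    · have := max'_lt C (a + 1) hne
      omega
    · exact Finset.le_max' _ a (Finset.mem_filter.mpr ⟨ha, by simp⟩)
  rw [psiAux_eq, dif_pos hne, hmax, if_pos rfl]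

lemma psiAux_pos_step (C : Finset ℕ) (m : ℕ) (c : ℕ) (h : (C.filter (· < c)).Nonempty) :
    psiAux C m ((C.filter (· < c)).max' h) + 1 ≤ psiAux C m c := by
  conv_rhs => rw [psiAux_eq C m c]
  rw [dif_pos h]
  split <;> omega

lemma psiAux_ge_two (C : Finset ℕ) (m : ℕ) {a : ℕ} (ha : a ∈ C) :
    ∀ b, a + 2 ≤ b → psiAux C m a + 2 ≤ psiAux C m b := by
  intro b
  induction b using Nat.strong_induction_on with
  | _ b ih =>
    intro hab
    have hne : (C.filter (· < b)).Nonempty :=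
      ⟨a, Finset.mem_filter.mpr ⟨ha, by omega⟩⟩
    have hpb : (C.filter (· < b)).max' hne < b := max'_lt C b hne
    have hap : a ≤ (C.filter (· < b)).max' hne :=
      Finset.le_max' _ a (Finset.mem_filter.mpr ⟨ha, by omega⟩)
    rcases eq_or_lt_of_le hap with heq | hlt
    · conv_rhs => rw [psiAux_eq C m b]
      rw [dif_pos hne, if_neg (by omega), ← heq]
      omega
    · have hpC : (C.filter (· < b)).max' hne ∈ C :=
        (Finset.mem_filter.mp (Finset.max'_mem _ hne)).1
      have h1 : psiAux C m a + 1 ≤ psiAux C m ((C.filter (· < b)).max' hne) := by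
        rcases eq_or_lt_of_le (Nat.succ_le_of_lt hlt) with heq1 | hlt1
        · rw [← heq1, psiAux_succ C m ha]
        · have := ih _ hpb (by omega)
          omega
      have h2 := psiAux_pos_step C m b hne
      omega

lemma psiAux_strict (C : Finset ℕ) (m : ℕ) {a b : ℕ} (ha : a ∈ C) (hab : a < b) :
    psiAux C m a < psiAux C m b := by
  rcases eq_or_lt_of_le (Nat.succ_le_of_lt hab) with heq | hlt
  · rw [← heq, psiAux_succ C m ha]; omega
  · have := psiAux_ge_two C m ha b (by omega); omega

lemma psiAux_succ_iff (C : Finset ℕ) (m : ℕ) {a b : ℕ} (ha : a ∈ C) (hab : a < b) :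
    psiAux C m b = psiAux C m a + 1 ↔ b = a + 1 := by
  constructor
  · intro h
    by_contra hne
    have := psiAux_ge_two C m ha b (by omega)
    omega
  · intro h; rw [h, psiAux_succ C m ha]

lemma psiAux_le (C : Finset ℕ) (m : ℕ) (hm : 0 < m) :
    ∀ c, psiAux C m c ≤ (m - 1) + (C.filter (· < c)).card * (m + 1) := by
  intro c
  induction c using Nat.strong_induction_on with
  | _ c ih =>
    rw [psiAux_eq]
    by_cases h : (C.filter (· < c)).Nonempty
    · rw [dif_pos h]
      have hpc : (C.filter (· < c)).max' h < c := max'_lt C c h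
      have ihp := ih _ hpc
      have hcard : (C.filter (· < (C.filter (· < c)).max' h)).card + 1
          ≤ (C.filter (· < c)).card := by
        apply Finset.card_lt_card
        constructor
        · intro x hx
          have hx' := Finset.mem_filter.mp hx
          refine Finset.mem_filter.mpr ⟨hx'.1, ?_⟩
          have h2 : x < (C.filter (· < c)).max' h := by simpa using hx'.2
          show x < c
          omega
        · intro hsub
          have hpmem : (C.filter (· < c)).max' h ∈ C.filter (· < c) := Finset.max'_mem _ h
          have := Finset.mem_filter.mp (hsub hpmem)
          simp at this
      have hmod : (c - (C.filter (· < c)).max' h - 2) % m ≤ m - 1 := by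
        have := Nat.mod_lt (c - (C.filter (· < c)).max' h - 2) hm; omega
      have hmul := Nat.mul_le_mul_right (m + 1) hcard
      have hexp : ((C.filter (· < (C.filter (· < c)).max' h)).card + 1) * (m + 1)
          = (C.filter (· < (C.filter (· < c)).max' h)).card * (m + 1) + (m + 1) := by ring
      rw [hexp] at hmul
      split <;> omega
    · rw [dif_neg h]
      have := Nat.mod_lt c hm
      omega

lemma arith_bound {n m : ℕ} (hn : 1 ≤ n) (hm : 1 ≤ m) :
    m - 1 + (n - 1) * (m + 1) ≤ (2 * n - 1) * m := by
  obtain ⟨n', rfl⟩ : ∃ n', n = n' + 1 := ⟨n - 1, by omega⟩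
  obtain ⟨m', rfl⟩ : ∃ m', m = m' + 1 := ⟨m - 1, by omega⟩
  have h1 : 2 * (n' + 1) - 1 = 2 * n' + 1 := by omega
  rw [h1]
  simp only [Nat.add_sub_cancel]
  nlinarith [Nat.zero_le (n' * m')]

lemma flatten_replicate_length (S : List Bool) (k : ℕ) :
    ((List.replicate k S).flatten).length = k * S.length := by
  induction k with
  | zero => simp
  | succ k ih => simp [List.replicate_succ, ih]; ring

lemma flatten_replicate_getD (S : List Bool) (k i : ℕ) (hi : i < k * S.length) :
    ((List.replicate k S).flatten).getD i false = S.getD (i % S.length) false := by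
  induction k generalizing i with
  | zero => omega
  | succ k ih =>
    have hexp : (k + 1) * S.length = k * S.length + S.length := by ring
    rw [List.replicate_succ, List.flatten_cons]
    by_cases h : i < S.length
    · rw [List.getD_append _ _ _ _ h, Nat.mod_eq_of_lt h]
    · push_neg at h
      rw [List.getD_append_right _ _ _ _ h, ih (i - S.length) (by omega)]
      have hmod : (i - S.length) % S.length = i % S.length := by
        conv_rhs => rw [show i = (i - S.length) + S.length by omega]
        rw [Nat.add_mod_right]
      rw [hmod]

lemma stringGraph_adj (T : List Bool) (u v : Fin (T.length + 1)) (hlt : (u : ℕ) < (v : ℕ)) :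
    (stringGraph T).Adj u v ↔
      (T.getD ((v : ℕ) - 1) false = false ↔ (u : ℕ) = (v : ℕ) - 1) := by
  have hne : u ≠ v := by
    intro h; rw [h] at hlt; omega
  simp only [stringGraph, SimpleGraph.fromRel_adj]
  constructor
  · rintro ⟨_, h | h⟩
    · exact h.2
    · exact absurd h.1 (by omega)
  · intro h
    exact ⟨hne, Or.inl ⟨hlt, h⟩⟩

/-- If every graph in `L` has at most `n` vertices and the graph induced by
`S^(2n-1)` contains no member of `L` as an induced subgraph, then for every
positive `k` the graph induced by `S^k` contains no member of `L`. -/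
theorem pump_string (n : ℕ) (L : Set (Σ m : ℕ, SimpleGraph (Fin m)))
    (hL : ∀ p ∈ L, p.1 ≤ n) (S : List Bool)
    (h : ∀ p ∈ L, IsEmpty (p.2 ↪g stringGraph ((List.replicate (2 * n - 1) S).flatten)))
    (k : ℕ) (hk : 0 < k) :
    ∀ p ∈ L, IsEmpty (p.2 ↪g stringGraph ((List.replicate k S).flatten)) := by
  intro p hp
  constructor
  intro e
  -- degenerate: empty string
  by_cases hS : S.length = 0
  · have hnil : S = [] := List.length_eq_zero_iff.mp hS
    have heq : (List.replicate k S).flatten = (List.replicate (2 * n - 1) S).flatten := by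
      simp [hnil]
    exact (h p hp).false (heq ▸ e)
  have hm : 0 < S.length := Nat.pos_of_ne_zero hS
  -- the set of occupied indices
  set val : Fin p.1 → ℕ := fun x => ((e x : Fin _) : ℕ) with hvaldef
  have hvx : ∀ x, val x = ((e x : Fin _) : ℕ) := fun _ => rfl
  have hvalinj : Function.Injective val := by
    intro x y hxy
    exact e.injective (Fin.ext hxy)
  set C : Finset ℕ := Finset.univ.image val with hCdef
  have hmemC : ∀ x, val x ∈ C := fun x => Finset.mem_image_of_mem val (Finset.mem_univ x)
  have hcardC : C.card = p.1 := by
    rw [hCdef, Finset.card_image_of_injective _ hvalinj, Finset.card_univ, Fintype.card_fin]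
  -- bound for psi
  have hbound : ∀ x : Fin p.1, psiAux C S.length (val x) < (2 * n - 1) * S.length + 1 := by
    intro x
    have hn1 : 1 ≤ n := le_trans (Nat.succ_le_of_lt x.pos) (hL p hp)
    have hfilt : (C.filter (· < val x)).card ≤ n - 1 := by
      have hss : (C.filter (· < val x)) ⊆ C.erase (val x) := by
        intro y hy
        have hy' := Finset.mem_filter.mp hy
        refine Finset.mem_erase.mpr ⟨?_, hy'.1⟩
        have : y < val x := by simpa using hy'.2
        omega
      have hle := Finset.card_le_card hss
      have hce : (C.erase (val x)).card = C.card - 1 :=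
        Finset.card_erase_of_mem (hmemC x)
      have hpn : p.1 ≤ n := hL p hp
      omega
    have h1 := psiAux_le C S.length hm (val x)
    have h2 : (C.filter (· < val x)).card * (S.length + 1) ≤ (n - 1) * (S.length + 1) :=
      Nat.mul_le_mul_right _ hfilt
    have h3 := arith_bound hn1 hm
    omega
  -- length facts
  have hlenk : ((List.replicate k S).flatten).length = k * S.length :=
    flatten_replicate_length S k
  have hlent : ((List.replicate (2 * n - 1) S).flatten).length = (2 * n - 1) * S.length :=
    flatten_replicate_length S (2 * n - 1)
  have hb : ∀ x : Fin p.1,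
      psiAux C S.length (val x) < ((List.replicate (2 * n - 1) S).flatten).length + 1 := by
    intro x; rw [hlent]; exact hbound x
  -- key adjacency transfer for ordered pairs
  have hkey : ∀ x y : Fin p.1, val x < val y →
      ((stringGraph ((List.replicate (2 * n - 1) S).flatten)).Adj
          ⟨psiAux C S.length (val x), hb x⟩ ⟨psiAux C S.length (val y), hb y⟩
        ↔ p.2.Adj x y) := by
    intro x y hxy
    have hgxy : psiAux C S.length (val x) < psiAux C S.length (val y) :=
      psiAux_strict C S.length (hmemC x) hxy
    have hvy1 : 1 ≤ val y := by omega
    have hgy1 : 1 ≤ psiAux C S.length (val y) := by omega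
    have hvyk : val y ≤ k * S.length := by
      have h1 := (e y).isLt
      have h2 := hvx y
      omega
    have hgyt : psiAux C S.length (val y) ≤ (2 * n - 1) * S.length := by
      have := hbound y; omega
    -- characters agree
    have hchar : ((List.replicate (2 * n - 1) S).flatten).getD
          (psiAux C S.length (val y) - 1) false
        = ((List.replicate k S).flatten).getD (val y - 1) false := by
      rw [flatten_replicate_getD S (2 * n - 1) _ (by omega),
          flatten_replicate_getD S k _ (by omega)]
      congr 1
      have hmeq : psiAux C S.length (val y) ≡ val y [MOD S.length] :=
        psiAux_modeq C S.length (val y)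
      have h1 : (psiAux C S.length (val y) - 1) + 1 ≡ (val y - 1) + 1 [MOD S.length] := by
        rw [Nat.sub_add_cancel hgy1, Nat.sub_add_cancel hvy1]
        exact hmeq
      exact Nat.ModEq.add_right_cancel' 1 h1
    have hconsec : (psiAux C S.length (val x) = psiAux C S.length (val y) - 1)
        ↔ (val x = val y - 1) := by
      have hsucc := psiAux_succ_iff C S.length (hmemC x) hxy
      omega
    have h1 : (stringGraph ((List.replicate (2 * n - 1) S).flatten)).Adj
          ⟨psiAux C S.length (val x), hb x⟩ ⟨psiAux C S.length (val y), hb y⟩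
        ↔ (((List.replicate (2 * n - 1) S).flatten).getD (psiAux C S.length (val y) - 1) false
              = false
            ↔ psiAux C S.length (val x) = psiAux C S.length (val y) - 1) :=
      stringGraph_adj _ _ _ hgxy
    have h2 : p.2.Adj x y
        ↔ (((List.replicate k S).flatten).getD (val y - 1) false = false
            ↔ val x = val y - 1) :=
      (e.map_rel_iff.symm).trans (stringGraph_adj _ (e x) (e y) hxy)
    refine h1.trans (Iff.trans ?_ h2.symm)
    rw [hchar, hconsec]
  have hkadj : ∀ x y : Fin p.1,
      ((stringGraph ((List.replicate (2 * n - 1) S).flatten)).Adj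
          ⟨psiAux C S.length (val x), hb x⟩ ⟨psiAux C S.length (val y), hb y⟩
        ↔ p.2.Adj x y) := by
    intro x y
    rcases lt_trichotomy (val x) (val y) with hlt | heq | hgt
    · exact hkey x y hlt
    · have hxy : x = y := hvalinj heq
      subst hxy
      exact iff_of_false (SimpleGraph.irrefl _) (SimpleGraph.irrefl _)
    · have hswap := hkey y x hgt
      constructor
      · intro ha; exact ((p.2.adj_comm y x).mp (hswap.mp ha.symm))
      · intro ha; exact (hswap.mpr ((p.2.adj_comm x y).mp ha)).symm
  have hinj : Function.Injective
      (fun x : Fin p.1 => (⟨psiAux C S.length (val x), hb x⟩ :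
        Fin (((List.replicate (2 * n - 1) S).flatten).length + 1))) := by
    intro x y hxy
    have hpp : psiAux C S.length (val x) = psiAux C S.length (val y) :=
      congrArg Fin.val hxy
    by_contra hne
    have hvne : val x ≠ val y := fun hc => hne (hvalinj hc)
    rcases lt_or_gt_of_ne hvne with hlt | hgt
    · have := psiAux_strict C S.length (hmemC x) hlt; omega
    · have := psiAux_strict C S.length (hmemC y) hgt; omega
  exact (h p hp).false ⟨⟨fun x => ⟨psiAux C S.length (val x), hb x⟩, hinj⟩,
    fun {x y} => hkadj x y⟩
end

section
/- Let G be a graph on n vertices and N an integer with N ≥ max{n, 3}. If G is an induced subgraph of some graph in 𝒢_{N+1}, then G is an induced subgraph of some graph in 𝒢_N. -/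
/-- `G` is an induced subgraph of some graph in the family `𝒢_m` of unavoidable
prime graphs: the 1-subdivision of `K_{1,m}` and its complement, the line graph of
`K_{2,m}` and its complement, the thin spider with `m` legs and its complement, the
half-graph of height `m`, the graph `H'_{m,I}`, and the graph `H*_m` and its complement. -/
def MemGInduced (m : ℕ) {V : Type*} (G : SimpleGraph V) : Prop :=
  Nonempty (G ↪g subdivStar m) ∨ Nonempty (G ↪g (subdivStar m)ᶜ) ∨
  Nonempty (G ↪g lineK2 m) ∨ Nonempty (G ↪g (lineK2 m)ᶜ) ∨
  Nonempty (G ↪g thinSpider m) ∨ Nonempty (G ↪g (thinSpider m)ᶜ) ∨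
  Nonempty (G ↪g halfGraph m) ∨
  Nonempty (G ↪g HPrimeG m) ∨
  Nonempty (G ↪g HStarG m) ∨ Nonempty (G ↪g (HStarG m)ᶜ)

/-!
Every graph in `𝒢_{N+1}` is built on `N + 1` indices (the legs `v_i, u_i`, or the columns of
`K_{2,N+1}`), plus possibly an apex, and deleting the vertices of index `i` leaves an induced
subgraph of the corresponding graph in `𝒢_N`. An induced subgraph with at most `N` vertices misses
some index by pigeonhole, so it survives one of these deletions. In `H*_{N+1}` the apex counts
as a vertex of index `0`, the index of its unique neighbour `v_0`.
-/

open SimpleGraph Function Set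

lemma Fintype.exists_forall_ne_some_of_card_lt {V ι : Type*} [Fintype V] [Fintype ι]
    (f : V → Option ι) (h : Fintype.card V < Fintype.card ι) : ∃ i, ∀ v, f v ≠ some i := by
  by_contra! hf
  choose g hg using hf
  have hg_inj : Injective g := fun i j hij => Option.some_injective _ (by rw [← hg, ← hg, hij])
  exact h.not_ge (Fintype.card_le_of_injective g hg_inj)

namespace SimpleGraph

variable {V W W' : Type*} {G : SimpleGraph V} {H : SimpleGraph W} {K : SimpleGraph W'}

lemma induce_compl (H : SimpleGraph W) (s : Set W) : Hᶜ.induce s = (H.induce s)ᶜ := by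
  ext a b
  simp [Subtype.ext_iff]

lemma isIndContained_induce_of_range_subset {s : Set W} (φ : G ↪g H) (hs : range φ ⊆ s) :
    G ⊴ H.induce s :=
  ⟨⟨⟨fun v => ⟨φ v, hs (mem_range_self v)⟩, fun _ _ h => φ.injective (congrArg Subtype.val h)⟩,
    φ.map_adj_iff⟩⟩

lemma induce_isIndContained_of_adj_iff {s : Set W} {f : W' → W} (hs : s ⊆ range f)
    (hadj : ∀ a b, f a ∈ s → f b ∈ s → (H.Adj (f a) (f b) ↔ K.Adj a b)) : H.induce s ⊴ K := by
  choose g hg using fun w : s => hs w.2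
  have hfg : ∀ w : s, f (g w) ∈ s := fun w => (hg w).symm ▸ w.2
  refine ⟨⟨⟨g, fun w w' h => Subtype.ext ?_⟩, @fun w w' => ?_⟩⟩
  · rw [← hg w, ← hg w', h]
  · change K.Adj (g w) (g w') ↔ H.Adj w w'
    rw [← hadj _ _ (hfg w) (hfg w'), hg, hg]

theorem IsIndContained.of_forall_induce {m : ℕ} [Fintype V] {idx : W → Option (Fin (m + 1))}
    (hG : G ⊴ H) (hV : Fintype.card V ≤ m) (hK : ∀ i, H.induce {w | idx w ≠ some i} ⊴ K) :
    G ⊴ K := by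
  obtain ⟨φ⟩ := hG
  obtain ⟨i, hi⟩ := Fintype.exists_forall_ne_some_of_card_lt (idx ∘ φ)
    (by rw [Fintype.card_fin]; omega)
  exact (isIndContained_induce_of_range_subset φ (range_subset_iff.2 hi)).trans (hK i)

theorem IsIndContained.of_forall_induce_compl {m : ℕ} [Fintype V]
    {idx : W → Option (Fin (m + 1))} (hG : G ⊴ Hᶜ) (hV : Fintype.card V ≤ m)
    (hK : ∀ i, H.induce {w | idx w ≠ some i} ⊴ K) : G ⊴ Kᶜ :=
  hG.of_forall_induce hV fun i => by rw [induce_compl]; exact (hK i).compl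

end SimpleGraph

section Deletion

variable {m : ℕ}

def sumSuccAbove (i : Fin (m + 1)) : Fin m ⊕ Fin m → Fin (m + 1) ⊕ Fin (m + 1) :=
  Sum.map i.succAbove i.succAbove

def sumIndex (w : Fin m ⊕ Fin m) : Option (Fin m) :=
  some (Sum.elim id id w)

def optIndex (w : Option (Fin m ⊕ Fin m)) : Option (Fin m) :=
  w.bind sumIndex

lemma mem_range_sumSuccAbove {i : Fin (m + 1)} {w : Fin (m + 1) ⊕ Fin (m + 1)}
    (h : sumIndex w ≠ some i) : w ∈ range (sumSuccAbove i) := by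
  rcases w with j | j <;> obtain ⟨k, rfl⟩ := Fin.exists_succAbove_eq (by simpa [sumIndex] using h)
  exacts [⟨.inl k, rfl⟩, ⟨.inr k, rfl⟩]

lemma mem_range_optionMap_sumSuccAbove {i : Fin (m + 1)}
    {w : Option (Fin (m + 1) ⊕ Fin (m + 1))} (h : optIndex w ≠ some i) :
    w ∈ range (Option.map (sumSuccAbove i)) := by
  rcases w with _ | w
  · exact ⟨none, rfl⟩
  · obtain ⟨x, rfl⟩ := mem_range_sumSuccAbove h
    exact ⟨some x, rfl⟩

lemma mem_range_prodMap_succAbove {i : Fin (m + 1)} {w : Fin 2 × Fin (m + 1)}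
    (h : some w.2 ≠ some i) : w ∈ range (Prod.map id i.succAbove) := by
  obtain ⟨k, hk⟩ := Fin.exists_succAbove_eq (Option.some_injective _ |>.ne_iff.1 h)
  exact ⟨(w.1, k), by simp [hk]⟩

lemma subdivStar_induce_optIndex_ne (i : Fin (m + 1)) :
    (subdivStar (m + 1)).induce {w | optIndex w ≠ some i} ⊴ subdivStar m :=
  induce_isIndContained_of_adj_iff (fun _ => mem_range_optionMap_sumSuccAbove) fun a b _ _ => by
    rcases a with _ | (a | a) <;> rcases b with _ | (b | b) <;>
      simp [subdivStar, sumSuccAbove]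

lemma HPrimeG_induce_optIndex_ne (i : Fin (m + 1)) :
    (HPrimeG (m + 1)).induce {w | optIndex w ≠ some i} ⊴ HPrimeG m :=
  induce_isIndContained_of_adj_iff (fun _ => mem_range_optionMap_sumSuccAbove) fun a b _ _ => by
    rcases a with _ | (a | a) <;> rcases b with _ | (b | b) <;>
      simp [HPrimeG, sumSuccAbove]

lemma thinSpider_induce_sumIndex_ne (i : Fin (m + 1)) :
    (thinSpider (m + 1)).induce {w | sumIndex w ≠ some i} ⊴ thinSpider m :=
  induce_isIndContained_of_adj_iff (fun _ => mem_range_sumSuccAbove) fun a b _ _ => by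
    rcases a with a | a <;> rcases b with b | b <;> simp [thinSpider, sumSuccAbove]

lemma halfGraph_induce_sumIndex_ne (i : Fin (m + 1)) :
    (halfGraph (m + 1)).induce {w | sumIndex w ≠ some i} ⊴ halfGraph m :=
  induce_isIndContained_of_adj_iff (fun _ => mem_range_sumSuccAbove) fun a b _ _ => by
    rcases a with a | a <;> rcases b with b | b <;> simp [halfGraph, sumSuccAbove]

lemma lineK2_induce_snd_ne (i : Fin (m + 1)) :
    (lineK2 (m + 1)).induce {w | some w.2 ≠ some i} ⊴ lineK2 m :=
  induce_isIndContained_of_adj_iff (fun _ => mem_range_prodMap_succAbove) fun a b _ _ => by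
    simp [lineK2, Prod.ext_iff]

lemma Fin.succAbove_eq_zero_iff_val {i : Fin (m + 1)} (hi : i ≠ 0) (j : Fin m) :
    i.succAbove j = 0 ↔ (j : ℕ) = 0 := by
  cases m with
  | zero => exact j.elim0
  | succ m => rw [Fin.succAbove_eq_zero_iff hi, Fin.val_eq_zero_iff]

def apexIndex : Option (Fin (m + 1) ⊕ Fin (m + 1)) → Option (Fin (m + 1))
  | none => some 0
  | some w => sumIndex w

lemma HStarG_induce_apexIndex_ne (i : Fin (m + 1)) :
    (HStarG (m + 1)).induce {w | apexIndex w ≠ some i} ⊴ HStarG m := by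
  refine induce_isIndContained_of_adj_iff (f := Option.map (sumSuccAbove i))
    (fun w hw => mem_range_optionMap_sumSuccAbove ?_) fun a b ha hb => ?_
  · rcases w with _ | w <;> simp_all [optIndex, apexIndex]
  · rcases a with _ | (a | a) <;> rcases b with _ | (b | b) <;>
      simp [HStarG, sumSuccAbove, apexIndex] at ha hb ⊢
    exacts [Fin.succAbove_eq_zero_iff_val (Ne.symm ha) b,
      Fin.succAbove_eq_zero_iff_val (Ne.symm hb) a]

end Deletion

/-- If `G` has `n` vertices, `N ≥ max{n,3}`, and `G` is an induced subgraph of some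
graph in `𝒢_{N+1}`, then `G` is an induced subgraph of some graph in `𝒢_N`. -/
theorem mem_G_step_down {V : Type*} [Fintype V] (G : SimpleGraph V) (n N : ℕ)
    (hn : Fintype.card V = n) (hN : max n 3 ≤ N)
    (h : MemGInduced (N + 1) G) : MemGInduced N G := by
  have hV : Fintype.card V ≤ N := by omega
  refine h.imp (IsIndContained.of_forall_induce · hV subdivStar_induce_optIndex_ne) <|
    .imp (IsIndContained.of_forall_induce_compl · hV subdivStar_induce_optIndex_ne) <|
    .imp (IsIndContained.of_forall_induce · hV lineK2_induce_snd_ne) <|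
    .imp (IsIndContained.of_forall_induce_compl · hV lineK2_induce_snd_ne) <|
    .imp (IsIndContained.of_forall_induce · hV thinSpider_induce_sumIndex_ne) <|
    .imp (IsIndContained.of_forall_induce_compl · hV thinSpider_induce_sumIndex_ne) <|
    .imp (IsIndContained.of_forall_induce · hV halfGraph_induce_sumIndex_ne) <|
    .imp (IsIndContained.of_forall_induce · hV HPrimeG_induce_optIndex_ne) <|
    .imp (IsIndContained.of_forall_induce · hV HStarG_induce_apexIndex_ne)
      (IsIndContained.of_forall_induce_compl · hV HStarG_induce_apexIndex_ne)
end

section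
/- If a hereditary class of graphs contains, for every positive integer k, the graph induced by the string S^k for some fixed nonempty (0,1)-string S, then the class contains infinitely many pairwise non-isomorphic prime graphs. -/
theorem List.getD_take {α : Type*} {l : List α} {n i : ℕ} {d : α} (h : i < n) :
    (l.take n).getD i d = l.getD i d := by
  simp only [List.getD_eq_getElem?_getD, List.getElem?_take_of_lt h]

theorem List.getD_flatten_replicate {α : Type*} {S : List α} {n i : ℕ} {d : α}
    (hi : i < n * S.length) : (List.replicate n S).flatten.getD i d = S.getD (i % S.length) d := by
  have hL : 0 < S.length := Nat.pos_of_mul_pos_left (Nat.zero_lt_of_lt hi)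
  conv_lhs => rw [← List.ofFn_getElem (xs := S), ← List.ofFn_fin_repeat]
  rw [List.getD_eq_getElem?_getD, List.getElem?_ofFn]
  simp [hi, Fin.repeat_apply, Fin.modNat, Nat.mod_lt _ hL]

namespace stringGraph

variable {T : List Bool} {i j : Fin (T.length + 1)}

theorem adj_iff_of_lt (h : (i : ℕ) < j) :
    (stringGraph T).Adj i j ↔ (T.getD ((j : ℕ) - 1) false = false ↔ (i : ℕ) = j - 1) := by
  simp only [stringGraph, SimpleGraph.fromRel_adj]
  exact ⟨fun ⟨_, h'⟩ => h'.elim And.right (fun h' => absurd h'.1 (by omega)),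
    fun h' => ⟨Fin.ne_of_lt h, Or.inl ⟨h, h'⟩⟩⟩

theorem adj_iff_of_succ_eq (h : (i : ℕ) + 1 = j) :
    (stringGraph T).Adj i j ↔ T.getD i false = false := by
  rw [adj_iff_of_lt (by omega), ← h]
  simp

theorem adj_iff_of_add_two_le (h : (i : ℕ) + 2 ≤ j) :
    (stringGraph T).Adj i j ↔ T.getD ((j : ℕ) - 1) false = true := by
  rw [adj_iff_of_lt (by omega)]
  simp [show (i : ℕ) ≠ j - 1 by omega]

def takeEmbedding (T : List Bool) (n : ℕ) : stringGraph (T.take n) ↪g stringGraph T where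
  toFun := Fin.castLE (by simp)
  inj' := Fin.castLE_injective _
  map_rel_iff' {a b} := by
    have adj_castLE_iff : ∀ {a b : Fin ((T.take n).length + 1)}, (a : ℕ) < b →
        ((stringGraph T).Adj (Fin.castLE (by simp) a) (Fin.castLE (by simp) b) ↔
          (stringGraph (T.take n)).Adj a b) := by
      intro a b hab
      have hb : (b : ℕ) - 1 < n := by have := b.2; have := List.length_take_le n T; omega
      rw [adj_iff_of_lt (T := T) (i := Fin.castLE _ a) (j := Fin.castLE _ b) hab, adj_iff_of_lt hab,
        List.getD_take hb]
      rfl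
    rcases lt_trichotomy (a : ℕ) b with hab | hab | hab
    · exact adj_castLE_iff hab
    · simp [Fin.ext hab]
    · rw [SimpleGraph.adj_comm, SimpleGraph.adj_comm (G := stringGraph (T.take n))]
      exact adj_castLE_iff hab

end stringGraph

namespace IsHomogeneousSet

theorem adj_iff_adj {V : Type*} [Fintype V] {G : SimpleGraph V} {X : Finset V}
    (hX : IsHomogeneousSet G X) {w u v : V} (hw : w ∉ X) (hu : u ∈ X) (hv : v ∈ X) :
    G.Adj w u ↔ G.Adj w v := by
  rcases hX.2.2 w hw with h | h
  · exact iff_of_true (h u hu) (h v hv)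
  · exact iff_of_false (h u hu) (h v hv)

variable {T : List Bool} {X : Finset (Fin (T.length + 1))}

theorem stringGraph_succ_mem (hX : IsHomogeneousSet (stringGraph T) X)
    {u v w : Fin (T.length + 1)} (hv : v ∈ X) (hu : u ∈ X) (hvu : v < u)
    (hw : (w : ℕ) = u + 1) : w ∈ X := by
  by_contra hwX
  have h := hX.adj_iff_adj hwX hu hv
  rw [SimpleGraph.adj_comm, stringGraph.adj_iff_of_succ_eq hw.symm, SimpleGraph.adj_comm,
    stringGraph.adj_iff_of_add_two_le (by rw [Fin.lt_def] at hvu; omega), hw,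
    Nat.add_sub_cancel] at h
  cases T.getD u false <;> simp at h

theorem stringGraph_last_mem (hX : IsHomogeneousSet (stringGraph T) X) :
    Fin.last T.length ∈ X := by
  have hcard : 1 < X.card := hX.1
  obtain ⟨j, hjX, hjmax⟩ := X.exists_max_image Fin.val (Finset.card_pos.mp (by omega))
  obtain ⟨i, hiX, hij⟩ := X.exists_mem_ne hcard j
  have hlt : i < j := lt_of_le_of_ne (hjmax i hiX) hij
  by_contra hlast
  have hj : (j : ℕ) < T.length := by
    have := j.2
    have : (j : ℕ) ≠ T.length := fun h => hlast (Fin.ext (a := j) (b := Fin.last _) h ▸ hjX)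
    omega
  have := hjmax _ (hX.stringGraph_succ_mem hiX hjX hlt (w := ⟨j + 1, by omega⟩) rfl)
  simp at this

theorem stringGraph_adj_iff_getD_last (hX : IsHomogeneousSet (stringGraph T) X)
    {w u : Fin (T.length + 1)} (hw : w ∉ X) (hu : u ∈ X) (hwT : (w : ℕ) + 2 ≤ T.length) :
    (stringGraph T).Adj w u ↔ T.getD (T.length - 1) false = true := by
  rw [hX.adj_iff_adj hw hu hX.stringGraph_last_mem,
    stringGraph.adj_iff_of_add_two_le (by simpa using hwT), Fin.val_last]

theorem stringGraph_exists_mem_le_one (hX : IsHomogeneousSet (stringGraph T) X) :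
    ∃ u ∈ X, (u : ℕ) ≤ 1 := by
  have hcard : 1 < X.card := hX.1
  obtain ⟨a, haX, hamin⟩ := X.exists_min_image Fin.val (Finset.card_pos.mp (by omega))
  obtain ⟨b, hbX, hba⟩ := X.exists_mem_ne hcard a
  refine ⟨a, haX, ?_⟩
  by_contra! ha
  have hlt : (a : ℕ) < T.length := by
    have := b.2
    have : (a : ℕ) ≠ b := fun h => hba (Fin.ext h).symm
    have := hamin b hbX
    omega
  have not_mem : ∀ k : ℕ, (hk : k < a) → (⟨k, by omega⟩ : Fin (T.length + 1)) ∉ X :=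
    fun k hk hmem => absurd (hamin _ hmem) (by simpa using hk)
  have h₁ := hX.stringGraph_adj_iff_getD_last (not_mem (a - 1) (by omega)) haX
    (by dsimp only; omega)
  have h₂ := hX.stringGraph_adj_iff_getD_last (not_mem (a - 2) (by omega)) haX
    (by dsimp only; omega)
  rw [stringGraph.adj_iff_of_succ_eq (by dsimp only; omega)] at h₁
  rw [stringGraph.adj_iff_of_add_two_le (by dsimp only; omega), ← h₁] at h₂
  cases T.getD (a - 1) false <;> simp at h₂

theorem stringGraph_false_of_zero_mem_of_one_mem (hX : IsHomogeneousSet (stringGraph T) X)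
    {u v : Fin (T.length + 1)} (hu : u ∈ X) (hv : v ∈ X) (hu0 : (u : ℕ) = 0) (hv1 : (v : ℕ) = 1) :
    False := by
  have hpos : ∀ k, 1 ≤ k → ∀ w : Fin (T.length + 1), (w : ℕ) = k → w ∈ X := by
    intro k hk
    induction k, hk using Nat.le_induction with
    | base => exact fun w hw => Fin.ext (hw.trans hv1.symm) ▸ hv
    | succ k hk ih =>
      exact fun w hw => hX.stringGraph_succ_mem hu (ih ⟨k, by omega⟩ rfl)
        (show (u : ℕ) < k by omega) hw
  have huniv : X = Finset.univ := Finset.eq_univ_of_forall fun w =>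
    if hw : (w : ℕ) = 0 then Fin.ext (hw.trans hu0.symm) ▸ hu else hpos w (by omega) w rfl
  exact hX.2.1.ne (by simp [huniv])

theorem stringGraph_exists_mem_not_mem_le_one (hX : IsHomogeneousSet (stringGraph T) X) :
    ∃ u ∈ X, ∃ w ∉ X, (u : ℕ) ≤ 1 ∧ (w : ℕ) ≤ 1 := by
  obtain ⟨u, hu, hu1⟩ := hX.stringGraph_exists_mem_le_one
  have hT : 1 ≤ T.length := by have := hX.1; have := hX.2.1; rw [Fintype.card_fin] at this; omega
  refine ⟨u, hu, ⟨1 - u, by omega⟩, fun hw => ?_, hu1, by simp⟩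
  rcases Nat.le_one_iff_eq_zero_or_eq_one.mp hu1 with h | h
  · exact hX.stringGraph_false_of_zero_mem_of_one_mem hu hw h (by simp [h])
  · exact hX.stringGraph_false_of_zero_mem_of_one_mem hw hu (by simp [h]) h

end IsHomogeneousSet

theorem isPrimeGraph_stringGraph_of_forall_getD_eq {T : List Bool} (hT : 3 ≤ T.length)
    (hconst : ∀ i < T.length, T.getD i false = T.getD (T.length - 1) false) :
    IsPrimeGraph (stringGraph T) := by
  rintro ⟨X, hX⟩
  obtain ⟨u, hu, w, hw, hu1, hw1⟩ := hX.stringGraph_exists_mem_not_mem_le_one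
  have hlast := hX.stringGraph_adj_iff_getD_last hw hu (by omega)
  have huw : (u : ℕ) ≠ w := fun h => hw (Fin.ext h ▸ hu)
  have hwu : (stringGraph T).Adj w u ↔ T.getD 0 false = false := by
    rcases Nat.le_one_iff_eq_zero_or_eq_one.mp hu1 with h | h
    · rw [SimpleGraph.adj_comm, stringGraph.adj_iff_of_succ_eq (by omega), h]
    · rw [stringGraph.adj_iff_of_succ_eq (by omega), show (w : ℕ) = 0 by omega]
  rw [hwu, hconst 0 (by omega)] at hlast
  cases T.getD (T.length - 1) false <;> simp at hlast

theorem isPrimeGraph_stringGraph_of_getD_ne {T : List Bool} {i : ℕ} (hi : 2 ≤ i)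
    (hiT : i + 3 ≤ T.length) (hne : T.getD i false ≠ T.getD (T.length - 1) false) :
    IsPrimeGraph (stringGraph T) := by
  rintro ⟨X, hX⟩
  obtain ⟨u, hu, w, hw, hu1, hw1⟩ := hX.stringGraph_exists_mem_not_mem_le_one
  have hr : (⟨i + 1, by omega⟩ : Fin (T.length + 1)) ∈ X := by
    by_contra hr
    have h := hX.stringGraph_adj_iff_getD_last hr hu (by dsimp only; omega)
    rw [SimpleGraph.adj_comm, stringGraph.adj_iff_of_add_two_le (by dsimp only; omega)] at h
    exact hne (Bool.eq_iff_iff.mpr (by simpa using h))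
  have h := hX.stringGraph_adj_iff_getD_last hw hr (by omega)
  rw [stringGraph.adj_iff_of_add_two_le (by dsimp only; omega)] at h
  exact hne (Bool.eq_iff_iff.mpr (by simpa using h))

theorem isPrimeGraph_stringGraph_of_periodic {S T : List Bool} (hS : S ≠ [])
    (hT : 3 * S.length + 3 ≤ T.length)
    (hper : ∀ i < T.length, T.getD i false = S.getD (i % S.length) false) :
    IsPrimeGraph (stringGraph T) := by
  have hL : 0 < S.length := List.length_pos_iff.mpr hS
  by_cases hconst : ∀ ρ < S.length, S.getD ρ false = T.getD (T.length - 1) false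
  · exact isPrimeGraph_stringGraph_of_forall_getD_eq (by omega)
      fun i hi => (hper i hi).trans (hconst _ (Nat.mod_lt _ hL))
  · obtain ⟨ρ, hρ, hne⟩ := not_forall₂.mp hconst
    refine isPrimeGraph_stringGraph_of_getD_ne (i := 2 * S.length + ρ) (by omega) (by omega) ?_
    rwa [hper _ (by omega), Nat.mul_add_mod', Nat.mod_eq_of_lt hρ]

/-- If a hereditary class of graphs contains the graph induced by `S^k` for every
positive integer `k`, for some fixed nonempty `(0,1)`-string `S`, then the class
contains infinitely many pairwise non-isomorphic prime graphs. -/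
theorem hereditary_infinitely_many_primes (C : Set (Σ m : ℕ, SimpleGraph (Fin m)))
    (hhered : ∀ p ∈ C, ∀ (m : ℕ) (H : SimpleGraph (Fin m)),
      Nonempty (H ↪g p.2) → (⟨m, H⟩ : Σ m : ℕ, SimpleGraph (Fin m)) ∈ C)
    (S : List Bool) (hS : S ≠ [])
    (hmem : ∀ k, 0 < k →
      (⟨((List.replicate k S).flatten).length + 1,
        stringGraph ((List.replicate k S).flatten)⟩ : Σ m : ℕ, SimpleGraph (Fin m)) ∈ C) :
    ∃ f : ℕ → Σ m : ℕ, SimpleGraph (Fin m),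
      (∀ i, f i ∈ C ∧ IsPrimeGraph (f i).2) ∧
      ∀ i j, i ≠ j → IsEmpty ((f i).2 ≃g (f j).2) := by
  have hL : 0 < S.length := List.length_pos_iff.mpr hS
  let P : ℕ → List Bool := fun n => ((List.replicate n S).flatten).take n
  have hP : ∀ n, (P n).length = n := fun n =>
    List.length_take_of_le (by simpa using Nat.le_mul_of_pos_right n hL)
  refine ⟨fun i => ⟨_, stringGraph (P (i + 3 * S.length + 3))⟩, fun i => ⟨?_, ?_⟩,
    fun i j hij => ⟨fun e => hij ?_⟩⟩
  · exact hhered _ (hmem _ (by omega)) _ _ ⟨stringGraph.takeEmbedding _ _⟩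
  · refine isPrimeGraph_stringGraph_of_periodic hS (by rw [hP]; omega) fun k hk => ?_
    rw [hP] at hk
    rw [List.getD_take hk, List.getD_flatten_replicate (by nlinarith)]
  · simpa [hP] using Fintype.card_congr e.toEquiv
end

section
/- Every half-graph of height n ≥ 3 (vertices v_1,…,v_n, u_1,…,u_n, edges v_i u_j for i ≤ j) has the property that deleting any single vertex yields a graph that is not prime, i.e., the half-graph contains no prime induced subgraph on 2n−1 vertices. -/
/-!
Deleting `v_i` with `i > 1` leaves `u_{i-1}` and `u_i` with the same neighbourhood, and deleting
`u_j` with `j < n` does the same for `v_j` and `v_{j+1}`; deleting `v_1` isolates `u_1`, and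
deleting `u_n` isolates `v_n`. Two such twins form a homogeneous set, and so does the set of all
vertices but an isolated one, as soon as at least three vertices remain.
-/

section Homogeneous

variable {V : Type*} [Fintype V] {G : SimpleGraph V}

theorem not_isPrimeGraph_of_adj_iff {a b : V} (hab : a ≠ b) (hV : 3 ≤ Fintype.card V)
    (h : ∀ v, G.Adj v a ↔ G.Adj v b) : ¬ IsPrimeGraph G := by
  classical
  refine not_not.2 ⟨{a, b}, by rw [Finset.card_pair hab], by rw [Finset.card_pair hab]; omega,
    fun v _ => ?_⟩
  by_cases hva : G.Adj v a
  · exact Or.inl (by simpa [← h v] using hva)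
  · exact Or.inr (by simpa [← h v] using hva)

theorem not_isPrimeGraph_of_forall_not_adj {a : V} (hV : 3 ≤ Fintype.card V)
    (h : ∀ v, ¬ G.Adj a v) : ¬ IsPrimeGraph G := by
  classical
  have hcard : (Finset.univ.erase a).card = Fintype.card V - 1 := by
    rw [Finset.card_erase_of_mem (Finset.mem_univ a), Finset.card_univ]
  refine not_not.2 ⟨Finset.univ.erase a, by omega, by omega, fun v hv => Or.inr fun x _ => ?_⟩
  obtain rfl : v = a := by simpa using hv
  exact h x

variable [DecidableEq V] {x : V}

theorem not_isPrimeGraph_induce_ne_of_adj_iff {a b : V} (ha : a ≠ x) (hb : b ≠ x)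
    (hab : a ≠ b) (hV : 4 ≤ Fintype.card V) (h : ∀ v ≠ x, G.Adj v a ↔ G.Adj v b) :
    ¬ IsPrimeGraph (G.induce {y | y ≠ x}) :=
  not_isPrimeGraph_of_adj_iff (a := ⟨a, ha⟩) (b := ⟨b, hb⟩) (by simpa using hab)
    (by rw [Set.card_ne_eq]; omega) fun v => by simpa using h v v.2

theorem not_isPrimeGraph_induce_ne_of_forall_not_adj {a : V} (ha : a ≠ x)
    (hV : 4 ≤ Fintype.card V) (h : ∀ v ≠ x, ¬ G.Adj a v) :
    ¬ IsPrimeGraph (G.induce {y | y ≠ x}) :=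
  not_isPrimeGraph_of_forall_not_adj (a := ⟨a, ha⟩) (by rw [Set.card_ne_eq]; omega) fun v => by
    simpa using h v v.2

end Homogeneous

namespace halfGraph

variable {n : ℕ} {i j : Fin n}

@[simp]
theorem adj_inl_inr : (halfGraph n).Adj (.inl i) (.inr j) ↔ i ≤ j := by
  simp [halfGraph]

@[simp]
theorem adj_inr_inl : (halfGraph n).Adj (.inr j) (.inl i) ↔ i ≤ j := by
  simp [halfGraph]

@[simp]
theorem not_adj_inl_inl : ¬ (halfGraph n).Adj (.inl i) (.inl j) := by
  simp [halfGraph]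

@[simp]
theorem not_adj_inr_inr : ¬ (halfGraph n).Adj (.inr i) (.inr j) := by
  simp [halfGraph]

theorem adj_inr_iff_adj_inr_succ (hij : (j : ℕ) + 1 = i) :
    ∀ v ≠ .inl i, (halfGraph n).Adj v (.inr j) ↔ (halfGraph n).Adj v (.inr i) := by
  rintro (k | k) hk
  · simp only [ne_eq, Sum.inl.injEq, Fin.ext_iff] at hk
    simp only [adj_inl_inr, Fin.le_iff_val_le_val]
    omega
  · simp

theorem adj_inl_iff_adj_inl_succ (hij : (j : ℕ) + 1 = i) :
    ∀ v ≠ .inr j, (halfGraph n).Adj v (.inl j) ↔ (halfGraph n).Adj v (.inl i) := by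
  rintro (k | k) hk
  · simp
  · simp only [ne_eq, Sum.inr.injEq, Fin.ext_iff] at hk
    simp only [adj_inr_inl, Fin.le_iff_val_le_val]
    omega

theorem not_adj_inr_zero (hi : (i : ℕ) = 0) :
    ∀ v ≠ .inl i, ¬ (halfGraph n).Adj (.inr i) v := by
  rintro (k | k) hk
  · simp only [ne_eq, Sum.inl.injEq, Fin.ext_iff] at hk
    simp only [adj_inr_inl, Fin.le_iff_val_le_val]
    omega
  · simp

theorem not_adj_inl_last (hj : (j : ℕ) + 1 = n) :
    ∀ v ≠ .inr j, ¬ (halfGraph n).Adj (.inl j) v := by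
  rintro (k | k) hk
  · simp
  · simp only [ne_eq, Sum.inr.injEq, Fin.ext_iff] at hk
    simp only [adj_inl_inr, Fin.le_iff_val_le_val]
    omega

theorem not_isPrimeGraph_induce_ne (hn : 2 ≤ n) (x : Fin n ⊕ Fin n) :
    ¬ IsPrimeGraph ((halfGraph n).induce {y | y ≠ x}) := by
  have hV : 4 ≤ Fintype.card (Fin n ⊕ Fin n) := by simp; omega
  rcases x with i | j
  · by_cases hi : (i : ℕ) = 0
    · exact not_isPrimeGraph_induce_ne_of_forall_not_adj (by simp) hV (not_adj_inr_zero hi)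
    · have hpred : (i : ℕ) - 1 + 1 = i := by omega
      exact not_isPrimeGraph_induce_ne_of_adj_iff (a := .inr ⟨i - 1, by omega⟩) (by simp)
        (by simp) (by simp [Fin.ext_iff]; omega) hV (adj_inr_iff_adj_inr_succ hpred)
  · by_cases hj : (j : ℕ) + 1 = n
    · exact not_isPrimeGraph_induce_ne_of_forall_not_adj (by simp) hV (not_adj_inl_last hj)
    · exact not_isPrimeGraph_induce_ne_of_adj_iff (b := .inl ⟨j + 1, by omega⟩) (by simp)
        (by simp) (by simp [Fin.ext_iff]) hV (adj_inl_iff_adj_inl_succ rfl)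

end halfGraph

/-- For `n ≥ 3`, deleting any single vertex from the half-graph of height `n` yields
a non-prime graph; equivalently, the half-graph contains no prime induced subgraph
on `2n-1` vertices. -/
theorem halfGraph_delete_not_prime (n : ℕ) (hn : 3 ≤ n) :
    (∀ x : Fin n ⊕ Fin n, ¬ IsPrimeGraph ((halfGraph n).induce {y | y ≠ x})) ∧
    (∀ s : Finset (Fin n ⊕ Fin n), s.card = 2 * n - 1 →
      ¬ IsPrimeGraph ((halfGraph n).induce ↑s)) := by
  have hdelete := halfGraph.not_isPrimeGraph_induce_ne (by omega : 2 ≤ n)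
  refine ⟨hdelete, fun s hs => ?_⟩
  obtain ⟨x, hx⟩ : ∃ x, sᶜ = {x} :=
    Finset.card_eq_one.mp (by simp [Finset.card_compl]; omega)
  have hsx : (s : Set (Fin n ⊕ Fin n)) = {y | y ≠ x} := by
    ext y
    simpa using (Finset.ext_iff.mp hx y).not
  convert hdelete x using 3
end
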